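/- arXiv:1706.09889 — 6 statements merged into one kernel-verified Lean document; each statement's English description precedes it below -/
import Mathlib

section
/- Suppose a nonnegative continuous function f on [0, T] satisfies the integral inequality f(t) ≤ δ + η ∫₀ᵗ f(τ)^p dτ with p > 1 and η, δ > 0; then for all t small enough that the polynomial η t y^p − y + δ has two positive roots, one has sup_{τ ≤ t} f(τ) ≤ y₁(η t, δ), the smaller positive root of η t y^p − y + δ = 0, provided f is continuous and f(0) ≤ δ. -/
open Set MeasureTheory

/-- The smaller positive root of `η y^p − y + δ = 0`. -/
noncomputable def y1 (p η δ : ℝ) : ℝ := sInf {y : ℝ | 0 < y ∧ η * y ^ p - y + δ = 0}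

/-!
For `a > 0` the function `Q(y) = a y^p - y + δ` is strictly convex on `[0, ∞)`, so it has at most
two positive roots `z₁ < z₂` and is negative strictly between them. Fix `c ∈ (z₁, z₂)`. As long as
`f < c` on `[0, s)`, the integral inequality gives `f s ≤ δ + η t c^p < c`, because `Q(c) < 0`
with `a = η t`; a continuity argument at the first time `f` reaches `c` shows that `f < c` on all
of `[0, t]`. Letting `c ↓ z₁ = y₁(η t, δ)` gives the bound.
-/

theorem StrictConvexOn.const_mul {E : Type*} [AddCommGroup E] [Module ℝ E] {s : Set E}
    {g : E → ℝ} (hg : StrictConvexOn ℝ s g) {c : ℝ} (hc : 0 < c) :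
    StrictConvexOn ℝ s fun x => c * g x := by
  refine ⟨hg.1, fun x hx y hy hxy a b ha hb hab => ?_⟩
  have := mul_lt_mul_of_pos_left (hg.2 hx hy hxy ha hb hab) hc
  simp only [smul_eq_mul] at this ⊢
  linarith

theorem strictConvexOn_mul_rpow_sub_add {p a : ℝ} (hp : 1 < p) (ha : 0 < a) (δ : ℝ) :
    StrictConvexOn ℝ (Ici 0) fun y : ℝ => a * y ^ p - y + δ :=
  (((strictConvexOn_rpow hp).const_mul ha).sub_concaveOn (concaveOn_id (convex_Ici 0))).add_const δ

theorem StrictConvexOn.eq_or_eq_of_apply_eq {s : Set ℝ} {g : ℝ → ℝ} (hg : StrictConvexOn ℝ s g)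
    {x y w : ℝ} (hx : x ∈ s) (hy : y ∈ s) (hw : w ∈ s) (hxy : x < y) (hgxy : g x = g y)
    (hgw : g w = g x) : w = x ∨ w = y := by
  have hmid : ∀ {u v m : ℝ}, u ∈ s → v ∈ s → u < m → m < v → g m < max (g u) (g v) :=
    fun hu hv hum hmv => hg.lt_on_openSegment hu hv (hum.trans hmv).ne
      (by rw [openSegment_eq_Ioo (hum.trans hmv)]; exact ⟨hum, hmv⟩)
  rcases lt_trichotomy w x with hwx | rfl | hxw
  · have := hmid hw hy hwx hxy
    simp only [hgw, ← hgxy, max_self, lt_self_iff_false] at this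
  · exact Or.inl rfl
  rcases lt_trichotomy w y with hwy | rfl | hyw
  · have := hmid hx hy hxw hwy
    simp only [hgw, ← hgxy, max_self, lt_self_iff_false] at this
  · exact Or.inr rfl
  · have := hmid hx hw hxy hyw
    simp only [hgw, ← hgxy, max_self, lt_self_iff_false] at this

theorem y1_eq_of_roots {p a δ z₁ z₂ : ℝ} (hp : 1 < p) (ha : 0 < a) (hz₁ : 0 < z₁) (hz : z₁ < z₂)
    (hQ₁ : a * z₁ ^ p - z₁ + δ = 0) (hQ₂ : a * z₂ ^ p - z₂ + δ = 0) : y1 p a δ = z₁ := by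
  have hroots : {y : ℝ | 0 < y ∧ a * y ^ p - y + δ = 0} = {z₁, z₂} := by
    ext w
    constructor
    · rintro ⟨hw, hQw⟩
      exact (strictConvexOn_mul_rpow_sub_add hp ha δ).eq_or_eq_of_apply_eq hz₁.le
        (hz₁.trans hz).le hw.le hz (hQ₁.trans hQ₂.symm) (hQw.trans hQ₁.symm)
    · rintro (rfl | rfl)
      exacts [⟨hz₁, hQ₁⟩, ⟨hz₁.trans hz, hQ₂⟩]
  rw [y1, hroots, csInf_pair, min_eq_left hz.le]

theorem ContinuousOn.forall_lt_of_forall_Ico_lt {α β : Type*} [ConditionallyCompleteLinearOrder α]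
    [TopologicalSpace α] [OrderTopology α] [LinearOrder β] [TopologicalSpace β]
    [OrderClosedTopology β] {f : α → β} {a b : α} {c : β} (hf : ContinuousOn f (Icc a b))
    (h : ∀ s ∈ Icc a b, (∀ u ∈ Ico a s, f u < c) → f s < c) : ∀ s ∈ Icc a b, f s < c := by
  by_contra! ⟨s, hs, hcs⟩
  set S := Icc a b ∩ f ⁻¹' Ici c
  have hS : IsClosed S := hf.preimage_isClosed_of_isClosed isClosed_Icc isClosed_Ici
  have hSbdd : BddBelow S := ⟨a, fun u hu => hu.1.1⟩
  have hτ : sInf S ∈ S := hS.csInf_mem ⟨s, hs, hcs⟩ hSbdd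
  have hbefore : ∀ u ∈ Ico a (sInf S), f u < c := fun u hu => not_le.1 fun hcu =>
    (csInf_le hSbdd ⟨⟨hu.1, hu.2.le.trans hτ.1.2⟩, hcu⟩).not_gt hu.2
  exact (h _ hτ.1 hbefore).not_ge hτ.2

theorem forall_lt_of_le_add_mul_integral_rpow {p η δ t c : ℝ} {f : ℝ → ℝ} (hp : 0 ≤ p)
    (hη : 0 ≤ η) (hc : 0 ≤ c) (hf : ContinuousOn f (Icc 0 t)) (hnn : ∀ s ∈ Icc 0 t, 0 ≤ f s)
    (hineq : ∀ s ∈ Icc 0 t, f s ≤ δ + η * ∫ u in (0:ℝ)..s, f u ^ p)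
    (hQ : η * t * c ^ p - c + δ < 0) : ∀ s ∈ Icc 0 t, f s < c := by
  refine hf.forall_lt_of_forall_Ico_lt fun s hs hlt => ?_
  have hcont : ContinuousOn (fun u => f u ^ p) (Icc 0 s) :=
    (hf.mono (Icc_subset_Icc le_rfl hs.2)).rpow_const fun _ _ => Or.inr hp
  have hle : ∀ u ∈ Ioo 0 s, f u ^ p ≤ c ^ p := fun u hu =>
    Real.rpow_le_rpow (hnn u ⟨hu.1.le, hu.2.le.trans hs.2⟩) (hlt u ⟨hu.1.le, hu.2⟩).le hp
  have hbound : ∫ u in (0:ℝ)..s, f u ^ p ≤ s * c ^ p := by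
    simpa using intervalIntegral.integral_mono_on_of_le_Ioo hs.1
      (hcont.intervalIntegrable_of_Icc (μ := volume) hs.1) intervalIntegrable_const hle
  have hcp : 0 ≤ c ^ p := Real.rpow_nonneg hc p
  calc f s ≤ δ + η * ∫ u in (0:ℝ)..s, f u ^ p := hineq s hs
    _ ≤ δ + η * (t * c ^ p) := by gcongr; exact hbound.trans (by gcongr; exact hs.2)
    _ < c := by linarith

theorem stmt4_general (T p η δ : ℝ) (hp : 1 < p) (hη : 0 < η)
    (f : ℝ → ℝ) (hf : ContinuousOn f (Icc 0 T))
    (hnn : ∀ t ∈ Icc (0:ℝ) T, 0 ≤ f t)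
    (hineq : ∀ t ∈ Icc (0:ℝ) T, f t ≤ δ + η * ∫ τ in (0:ℝ)..t, f τ ^ p) :
    ∀ t ∈ Icc (0:ℝ) T,
      (∃ z₁ z₂ : ℝ, 0 < z₁ ∧ z₁ < z₂ ∧
          (η * t) * z₁ ^ p - z₁ + δ = 0 ∧ (η * t) * z₂ ^ p - z₂ + δ = 0) →
      ∀ τ ∈ Icc (0:ℝ) t, f τ ≤ y1 p (η * t) δ := by
  rintro t ht ⟨z₁, z₂, hz₁, hz, hQ₁, hQ₂⟩ τ hτ
  have htpos : 0 < t := ht.1.lt_of_ne <| by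
    rintro rfl
    simp only [mul_zero, zero_mul, zero_sub] at hQ₁ hQ₂
    linarith
  have ha : 0 < η * t := mul_pos hη htpos
  rw [y1_eq_of_roots hp ha hz₁ hz hQ₁ hQ₂]
  have hsub : Icc 0 t ⊆ Icc 0 T := Icc_subset_Icc le_rfl ht.2
  have hlt : ∀ c ∈ Ioo z₁ z₂, f τ < c := fun c hc => by
    have hQc : η * t * c ^ p - c + δ < 0 := by
      simpa [hQ₁, hQ₂] using (strictConvexOn_mul_rpow_sub_add hp ha δ).lt_on_openSegment
        hz₁.le (hz₁.trans hz).le hz.ne (by rwa [openSegment_eq_Ioo hz])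
    exact forall_lt_of_le_add_mul_integral_rpow (zero_le_one.trans hp.le) hη.le
      (hz₁.trans hc.1).le (hf.mono hsub) (fun s hs => hnn s (hsub hs))
      (fun s hs => hineq s (hsub hs)) hQc τ hτ
  refine le_of_forall_gt_imp_ge_of_dense fun c hc => ?_
  have hmid : min c ((z₁ + z₂) / 2) ∈ Ioo z₁ z₂ :=
    ⟨lt_min hc (by linarith), (min_le_right _ _).trans_lt (by linarith)⟩
  exact (hlt _ hmid).le.trans (min_le_left _ _)

/-- If a nonnegative continuous function `f` on `[0, T]` satisfies
`f(t) ≤ δ + η ∫₀ᵗ f(τ)^p dτ` with `p > 1`, `η, δ > 0`, and `f(0) ≤ δ`, then for all `t`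
such that the polynomial `η t y^p − y + δ` has two positive roots, one has
`sup_{τ ≤ t} f(τ) ≤ y₁(η t, δ)`, the smaller positive root of `η t y^p − y + δ = 0`. -/
theorem stmt4 (T p η δ : ℝ) (hT : 0 < T) (hp : 1 < p) (hη : 0 < η) (hδ : 0 < δ)
    (f : ℝ → ℝ) (hf : ContinuousOn f (Icc 0 T))
    (hnn : ∀ t ∈ Icc (0:ℝ) T, 0 ≤ f t)
    (h0 : f 0 ≤ δ)
    (hineq : ∀ t ∈ Icc (0:ℝ) T, f t ≤ δ + η * ∫ τ in (0:ℝ)..t, f τ ^ p) :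
    ∀ t ∈ Icc (0:ℝ) T,
      (∃ z₁ z₂ : ℝ, 0 < z₁ ∧ z₁ < z₂ ∧
          (η * t) * z₁ ^ p - z₁ + δ = 0 ∧ (η * t) * z₂ ^ p - z₂ + δ = 0) →
      ∀ τ ∈ Icc (0:ℝ) t, f τ ≤ y1 p (η * t) δ :=
  stmt4_general T p η δ hp hη f hf hnn hineq
end

section
/- Under the hypotheses of the NLS short-time theorem, for 0 < ε < 1, α ≥ 0 with α < 1/(p−1), and β = 1 − (p−1)α, the relative error ‖φ̃(t) − φ(t)‖_{H^s}/‖φ(t)‖_{H^s} ≤ B ε + O(ε²) for all 0 ≤ t ≤ C ε^β, where B = |g| K_p C M^{p−1}. -/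
open Set MeasureTheory
open Filter Topology

set_option maxHeartbeats 2000000

private lemma pow_one_add_le_aux (u : ℝ) (h0 : 0 ≤ u) (h1 : u ≤ 1) :
    ∀ m : ℕ, (1 + u) ^ m ≤ 1 + ((2:ℝ) ^ m - 1) * u := by
  intro m
  induction m with
  | zero => simp
  | succ k ih =>
    have h2 : (1:ℝ) ≤ (2:ℝ) ^ k := one_le_pow₀ (by norm_num)
    have h3 : (0:ℝ) ≤ (1 + u) ^ k := pow_nonneg (by linarith) k
    calc (1 + u) ^ (k + 1) = (1 + u) ^ k * (1 + u) := by ring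
      _ ≤ (1 + ((2:ℝ) ^ k - 1) * u) * (1 + u) := by nlinarith
      _ ≤ 1 + ((2:ℝ) ^ (k + 1) - 1) * u := by
          have h4 : (2:ℝ) ^ (k+1) = 2 * 2 ^ k := by ring
          have h5 : u * u ≤ u := by nlinarith
          nlinarith [mul_nonneg (by linarith : (0:ℝ) ≤ (2:ℝ)^k - 1) (by nlinarith : (0:ℝ) ≤ u - u * u)]

/-- Short-time theorem for NLS: with initial data `ε^α φ₀` (`‖φ₀‖_{H^s} = M`), `0 ≤ α < 1/(p−1)`,
and `β = 1 − (p−1)α`, the relative error between the free solution `φ̃(t) = ε^α e^{iΔt}φ₀` and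
the NLS solution `φ` satisfies `‖φ̃(t) − φ(t)‖ / ‖φ(t)‖ ≤ B ε + O(ε²)` for `0 ≤ t ≤ C ε^β`,
where `B = |g| K_p C M^{p−1}`.  Abstract setting: `E` plays the role of `H^s(ℝⁿ)`, `s > n/2`;
`U t` is the group `e^{iΔt}` (isometric on `H^s`); `N u = |u|^{p−1}u` with
`‖N u‖ ≤ K_p ‖u‖^p`; the solution `φ ε` is given by its Duhamel representation for each `ε`. -/
theorem stmt7 {E : Type*} [NormedAddCommGroup E] [NormedSpace ℂ E] [CompleteSpace E]
    (n : ℕ) (s p g Kp α M C T : ℝ) (hn : 1 ≤ n) (hs : (n : ℝ) / 2 < s)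
    (hp : 1 < p) (hα : 0 ≤ α) (hαp : α < 1 / (p - 1)) (hC : 0 < C) (hT : 0 < T)
    (hKp : 0 ≤ Kp) (hM : 0 < M)
    (U : ℝ → E →ₗᵢ[ℂ] E) (N : E → E) (hN : ∀ u : E, ‖N u‖ ≤ Kp * ‖u‖ ^ p)
    (φ₀ : E) (hφ₀ : ‖φ₀‖ = M)
    (φ : ℝ → ℝ → E)
    (hφ : ∀ ε ∈ Ioo (0:ℝ) 1, ContinuousOn (φ ε) (Icc 0 T))
    (hInt : ∀ ε ∈ Ioo (0:ℝ) 1, ∀ t ∈ Icc (0:ℝ) T,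
      IntervalIntegrable (fun τ => U (t - τ) (N (φ ε τ))) volume 0 t)
    (hDuh : ∀ ε ∈ Ioo (0:ℝ) 1, ∀ t ∈ Icc (0:ℝ) T,
      φ ε t = ((ε ^ α : ℝ) : ℂ) • U t φ₀
        + (Complex.I * (g : ℂ)) • ∫ τ in (0:ℝ)..t, U (t - τ) (N (φ ε τ))) :
    ∃ D ≥ (0:ℝ), ∃ ε₀ > (0:ℝ), ∀ ε : ℝ, 0 < ε → ε < ε₀ → ε < 1 →
      C * ε ^ (1 - (p - 1) * α) ≤ T →
      ∀ t ∈ Icc (0:ℝ) (C * ε ^ (1 - (p - 1) * α)),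
        ‖((ε ^ α : ℝ) : ℂ) • U t φ₀ - φ ε t‖
          ≤ (|g| * Kp * C * M ^ (p - 1) * ε + D * ε ^ 2) * ‖φ ε t‖ := by
  have hp0 : (0:ℝ) ≤ p := by linarith
  set m : ℕ := ⌈p⌉₊ with hm
  have hmp : p ≤ (m:ℝ) := Nat.le_ceil p
  clear_value m
  set B : ℝ := |g| * Kp * C * M ^ (p - 1) with hB
  clear_value B
  have hB0 : 0 ≤ B := by
    rw [hB]
    exact mul_nonneg (mul_nonneg (mul_nonneg (abs_nonneg g) hKp) hC.le) (Real.rpow_nonneg hM.le _)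
  set q : ℝ := (2:ℝ) ^ p * B with hq
  clear_value q
  have hq0 : 0 ≤ q := by
    rw [hq]
    exact mul_nonneg (Real.rpow_nonneg (by norm_num) p) hB0
  set L : ℝ := ((2:ℝ) ^ m - 1) * q with hL
  clear_value L
  have hL0 : 0 ≤ L := by
    rw [hL]
    have : (1:ℝ) ≤ (2:ℝ) ^ m := one_le_pow₀ (by norm_num)
    exact mul_nonneg (by linarith) hq0
  set D : ℝ := B * L + 4 * B ^ 2 with hD
  clear_value D
  have hD0 : 0 ≤ D := by
    rw [hD]
    exact add_nonneg (mul_nonneg hB0 hL0) (by positivity)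
  have hSpos : (0:ℝ) < 1 + q + L + 4 * B := by linarith only [hq0, hL0, hB0]
  refine ⟨D, hD0, 1 / (1 + q + L + 4 * B), div_pos one_pos hSpos, ?_⟩
  intro ε hε hεε₀ hε1 hTT t ht
  have hmemε : ε ∈ Ioo (0:ℝ) 1 := ⟨hε, hε1⟩
  have hεα : 0 < ε ^ α := Real.rpow_pos_of_pos hε α
  set a : ℝ := ε ^ α * M with ha
  clear_value a
  have ha0 : 0 < a := by rw [ha]; exact mul_pos hεα hM
  set Tε : ℝ := C * ε ^ (1 - (p - 1) * α) with hTε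
  clear_value Tε
  have hTε0 : 0 < Tε := by rw [hTε]; exact mul_pos hC (Real.rpow_pos_of_pos hε _)
  -- small-ε numerical facts
  have hεS : ε * (1 + q + L + 4 * B) < 1 := (lt_div_iff₀ hSpos).mp hεε₀
  have hqε0 : 0 ≤ q * ε := mul_nonneg hq0 hε.le
  have hLε0 : 0 ≤ L * ε := mul_nonneg hL0 hε.le
  have hBε0 : 0 ≤ B * ε := mul_nonneg hB0 hε.le
  have hqε : q * ε < 1 := by linarith only [hεS, hqε0, hLε0, hBε0, hε]
  have hLε : L * ε < 1 := by linarith only [hεS, hqε0, hLε0, hBε0, hε]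
  have h4Bε : 4 * B * ε < 1 := by linarith only [hεS, hqε0, hLε0, hBε0, hε]
  have hLB : (L + 4 * B) * ε ≤ 1 := by linarith only [hεS, hqε0, hLε0, hBε0, hε]
  have hDε : D * ε ≤ B := by
    rw [hD]
    calc (B * L + 4 * B ^ 2) * ε = B * ((L + 4 * B) * ε) := by ring
      _ ≤ B * 1 := mul_le_mul_of_nonneg_left hLB hB0
      _ = B := mul_one B
  -- key exponent identity
  have hKEY : |g| * Kp * a ^ p * Tε = B * a * ε := by
    have h1 : a ^ p = ε ^ (α * p) * M ^ p := by
      rw [ha, Real.mul_rpow hεα.le hM.le, Real.rpow_mul hε.le]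
    have e1 : ε ^ (α * p) * ε ^ (1 - (p - 1) * α) = ε ^ α * ε := by
      rw [← Real.rpow_add hε, show α * p + (1 - (p - 1) * α) = α + 1 by ring,
        Real.rpow_add hε, Real.rpow_one]
    have e2 : M ^ p = M ^ (p - 1) * M := by
      rw [show p = p - 1 + 1 by ring, Real.rpow_add hM, Real.rpow_one]
      ring_nf
    rw [h1, e2, hTε, hB, ha]
    linear_combination (|g| * Kp * (M ^ (p - 1) * M) * C) * e1
  -- the Duhamel estimate
  have hEST : ∀ ρ : ℝ, 0 ≤ ρ → ∀ u ∈ Icc (0:ℝ) Tε, (∀ τ ∈ Icc (0:ℝ) u, ‖φ ε τ‖ ≤ ρ) →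
      ‖φ ε u - ((ε ^ α : ℝ) : ℂ) • U u φ₀‖ ≤ |g| * Kp * ρ ^ p * Tε := by
    intro ρ hρ u hu hbd
    have huT : u ∈ Icc (0:ℝ) T := ⟨hu.1, hu.2.trans hTT⟩
    have hd := hDuh ε hmemε u huT
    have heq : φ ε u - ((ε ^ α : ℝ) : ℂ) • U u φ₀
        = (Complex.I * (g:ℂ)) • ∫ τ in (0:ℝ)..u, U (u - τ) (N (φ ε τ)) := by
      rw [hd]; abel
    rw [heq, norm_smul]
    have hIg : ‖Complex.I * (g:ℂ)‖ = |g| := by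
      rw [norm_mul, Complex.norm_I, one_mul, Complex.norm_real, Real.norm_eq_abs]
    rw [hIg]
    have hint : ‖∫ τ in (0:ℝ)..u, U (u - τ) (N (φ ε τ))‖ ≤ Kp * ρ ^ p * |u - 0| := by
      apply intervalIntegral.norm_integral_le_of_norm_le_const
      intro x hx
      rw [Set.uIoc_of_le hu.1] at hx
      calc ‖U (u - x) (N (φ ε x))‖ = ‖N (φ ε x)‖ := (U (u - x)).norm_map _
        _ ≤ Kp * ‖φ ε x‖ ^ p := hN _
        _ ≤ Kp * ρ ^ p := by
            exact mul_le_mul_of_nonneg_left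
              (Real.rpow_le_rpow (norm_nonneg _) (hbd x ⟨hx.1.le, hx.2⟩) hp0) hKp
    have h2 : Kp * ρ ^ p * |u - 0| ≤ Kp * ρ ^ p * Tε := by
      have hu0 : |u - 0| = u := by rw [sub_zero, abs_of_nonneg hu.1]
      rw [hu0]
      exact mul_le_mul_of_nonneg_left hu.2 (by positivity)
    calc |g| * ‖∫ τ in (0:ℝ)..u, U (u - τ) (N (φ ε τ))‖
        ≤ |g| * (Kp * ρ ^ p * Tε) := by
          exact mul_le_mul_of_nonneg_left (hint.trans h2) (abs_nonneg g)
      _ = |g| * Kp * ρ ^ p * Tε := by ring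
  -- value at 0
  have hf0 : ‖φ ε 0‖ = a := by
    have hd := hDuh ε hmemε 0 ⟨le_rfl, hT.le⟩
    rw [intervalIntegral.integral_same, smul_zero, add_zero] at hd
    rw [hd, norm_smul, Complex.norm_real, Real.norm_eq_abs,
      abs_of_nonneg (Real.rpow_nonneg hε.le α), (U 0).norm_map, hφ₀]
    exact ha.symm
  have hcont : ContinuousOn (fun τ => ‖φ ε τ‖) (Icc 0 T) := (hφ ε hmemε).norm
  -- bootstrap set
  set A : Set ℝ := {u | u ∈ Icc (0:ℝ) Tε ∧ ∀ τ ∈ Icc (0:ℝ) u, ‖φ ε τ‖ ≤ 2 * a} with hA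
  have h0A : (0:ℝ) ∈ A := by
    refine ⟨⟨le_rfl, hTε0.le⟩, fun τ hτ => ?_⟩
    have : τ = 0 := le_antisymm hτ.2 hτ.1
    rw [this, hf0]; linarith only [ha0]
  have hbddA : BddAbove A := ⟨Tε, fun x hx => hx.1.2⟩
  have hneA : A.Nonempty := ⟨0, h0A⟩
  set t₀ : ℝ := sSup A with ht₀
  clear_value t₀
  have ht₀0 : 0 ≤ t₀ := by rw [ht₀]; exact le_csSup hbddA h0A
  have ht₀T : t₀ ≤ Tε := by rw [ht₀]; exact csSup_le hneA fun x hx => hx.1.2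
  have hlt : ∀ τ, 0 ≤ τ → τ < t₀ → ‖φ ε τ‖ ≤ 2 * a := by
    intro τ h0 hτ
    rw [ht₀] at hτ
    obtain ⟨u, huA, hτu⟩ := exists_lt_of_lt_csSup hneA hτ
    exact huA.2 τ ⟨h0, hτu.le⟩
  have ht₀A : t₀ ∈ A := by
    refine ⟨⟨ht₀0, ht₀T⟩, fun τ hτ => ?_⟩
    rcases lt_or_eq_of_le hτ.2 with h | h
    · exact hlt τ hτ.1 h
    · rcases eq_or_lt_of_le ht₀0 with h0 | h0
      · rw [h, ← h0, hf0]; linarith only [ha0]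
      · haveI : (𝓝[Ico (0:ℝ) t₀] t₀).NeBot := by
          apply mem_closure_iff_nhdsWithin_neBot.mp
          rw [closure_Ico (ne_of_lt h0)]
          exact ⟨ht₀0, le_rfl⟩
        have hc : ContinuousWithinAt (fun τ => ‖φ ε τ‖) (Icc 0 T) t₀ :=
          hcont.continuousWithinAt ⟨ht₀0, ht₀T.trans hTT⟩
        have htd : Filter.Tendsto (fun τ => ‖φ ε τ‖) (𝓝[Ico (0:ℝ) t₀] t₀) (𝓝 ‖φ ε t₀‖) :=
          hc.mono_left (nhdsWithin_mono _ fun x hx => ⟨hx.1, hx.2.le.trans (ht₀T.trans hTT)⟩)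
        rw [h]
        refine le_of_tendsto htd ?_
        filter_upwards [self_mem_nhdsWithin] with x hx
        exact hlt x hx.1 hx.2
  -- refined bound on [0, t₀]
  have hsm : ∀ u : ℝ, ‖((ε ^ α : ℝ) : ℂ) • U u φ₀‖ = a := by
    intro u
    rw [norm_smul, Complex.norm_real, Real.norm_eq_abs,
      abs_of_nonneg (Real.rpow_nonneg hε.le α), (U u).norm_map, hφ₀]
    exact ha.symm
  have h2p : |g| * Kp * (2 * a) ^ p * Tε = q * a * ε := by
    rw [Real.mul_rpow (by norm_num : (0:ℝ) ≤ 2) ha0.le, hq]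
    linear_combination (2:ℝ) ^ p * hKEY
  have himp : ∀ u ∈ Icc (0:ℝ) t₀, ‖φ ε u‖ ≤ a * (1 + q * ε) := by
    intro u hu
    have hu' : u ∈ Icc (0:ℝ) Tε := ⟨hu.1, hu.2.trans ht₀T⟩
    have hd := hEST (2 * a) (by linarith only [ha0]) u hu' (fun τ hτ => ht₀A.2 τ ⟨hτ.1, hτ.2.trans hu.2⟩)
    have htri : ‖φ ε u‖ - ‖((ε ^ α : ℝ) : ℂ) • U u φ₀‖
        ≤ ‖φ ε u - ((ε ^ α : ℝ) : ℂ) • U u φ₀‖ := norm_sub_norm_le _ _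
    rw [hsm u] at htri
    rw [h2p] at hd
    linarith only [htri, hd]
  have hfull : t₀ = Tε := by
    by_contra hne
    have hlt' : t₀ < Tε := lt_of_le_of_ne ht₀T hne
    have hft₀ : ‖φ ε t₀‖ < 2 * a := by
      have h1 := himp t₀ ⟨ht₀0, le_rfl⟩
      have h2 : 0 < a * (1 - q * ε) := mul_pos ha0 (by linarith only [hqε])
      nlinarith only [h1, h2]
    have hc : ContinuousWithinAt (fun τ => ‖φ ε τ‖) (Icc 0 T) t₀ :=
      hcont.continuousWithinAt ⟨ht₀0, ht₀T.trans hTT⟩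
    have hev : (fun τ => ‖φ ε τ‖) ⁻¹' (Iio (2 * a)) ∈ 𝓝[Icc (0:ℝ) T] t₀ :=
      hc (Iio_mem_nhds hft₀)
    rw [Metric.mem_nhdsWithin_iff] at hev
    obtain ⟨δ, hδ, hball⟩ := hev
    have ht₀t₁ : t₀ < min (t₀ + δ / 2) Tε := lt_min (by linarith only [hδ]) hlt'
    have ht₁A : min (t₀ + δ / 2) Tε ∈ A := by
      refine ⟨⟨by linarith only [ht₀0, ht₀t₁], min_le_right _ _⟩, fun τ hτ => ?_⟩
      rcases le_or_gt τ t₀ with hle | hgt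
      · exact ht₀A.2 τ ⟨hτ.1, hle⟩
      · have hτδ : τ ∈ Metric.ball t₀ δ := by
          rw [Metric.mem_ball, Real.dist_eq, abs_of_nonneg (by linarith only [hgt])]
          have : τ ≤ t₀ + δ / 2 := hτ.2.trans (min_le_left _ _)
          linarith only [this, hδ]
        have hτT : τ ∈ Icc (0:ℝ) T := ⟨hτ.1, hτ.2.trans ((min_le_right _ _).trans hTT)⟩
        exact (hball ⟨hτδ, hτT⟩).le
    have hle := le_csSup hbddA ht₁A
    rw [← ht₀] at hle
    exact absurd hle (not_le.mpr ht₀t₁)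
  have href : ∀ u ∈ Icc (0:ℝ) Tε, ‖φ ε u‖ ≤ a * (1 + q * ε) := by
    rw [hfull] at himp; exact himp
  -- final estimates
  set P : ℝ := (1 + q * ε) ^ p with hPdef
  clear_value P
  have hP1 : 1 ≤ P := by
    rw [hPdef]
    calc (1:ℝ) = (1:ℝ) ^ p := (Real.one_rpow p).symm
      _ ≤ (1 + q * ε) ^ p := Real.rpow_le_rpow (by norm_num) (by linarith only [hqε0]) hp0
  have hPL : P ≤ 1 + L * ε := by
    rw [hPdef]
    calc (1 + q * ε) ^ p ≤ (1 + q * ε) ^ (m:ℝ) :=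
          Real.rpow_le_rpow_of_exponent_le (by linarith only [hqε0]) hmp
      _ = (1 + q * ε) ^ m := Real.rpow_natCast _ m
      _ ≤ 1 + ((2:ℝ) ^ m - 1) * (q * ε) :=
          pow_one_add_le_aux (q * ε) hqε0 hqε.le m
      _ = 1 + L * ε := by rw [hL]; ring
  have hρP : |g| * Kp * (a * (1 + q * ε)) ^ p * Tε = B * a * ε * P := by
    rw [Real.mul_rpow ha0.le (by linarith only [hqε0] : (0:ℝ) ≤ 1 + q * ε), ← hPdef]
    linear_combination P * hKEY
  have hdiff : ‖φ ε t - ((ε ^ α : ℝ) : ℂ) • U t φ₀‖ ≤ B * a * ε * P := by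
    have h1 := hEST (a * (1 + q * ε)) (le_of_lt (mul_pos ha0 (by linarith only [hqε0]))) t ht
      (fun τ hτ => href τ ⟨hτ.1, hτ.2.trans ht.2⟩)
    rw [hρP] at h1
    exact h1
  have hlow : a * (1 - B * ε * P) ≤ ‖φ ε t‖ := by
    have h1 : ‖((ε ^ α : ℝ) : ℂ) • U t φ₀‖ - ‖φ ε t‖
        ≤ ‖((ε ^ α : ℝ) : ℂ) • U t φ₀ - φ ε t‖ := norm_sub_norm_le _ _
    rw [norm_sub_rev, hsm t] at h1
    linarith only [h1, hdiff]
  -- the scalar inequality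
  have hP2 : P ≤ 2 := by linarith only [hPL, hLε]
  have hBεP2 : B * ε * P ≤ 2 * (B * ε) := by
    have := mul_le_mul_of_nonneg_left hP2 hBε0
    linarith only [this]
  have hsum2 : B * ε + D * ε ^ 2 ≤ 2 * (B * ε) := by
    have h1 := mul_le_mul_of_nonneg_right hDε hε.le
    have hsq : D * ε ^ 2 = D * ε * ε := by ring
    linarith only [h1, hsq]
  have hBεP0 : 0 ≤ B * ε * P := mul_nonneg hBε0 (by linarith only [hP1])
  have he4 : (B * ε + D * ε ^ 2) * (B * ε * P) ≤ 4 * B ^ 2 * ε ^ 2 := by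
    calc (B * ε + D * ε ^ 2) * (B * ε * P) ≤ (2 * (B * ε)) * (2 * (B * ε)) :=
          mul_le_mul hsum2 hBεP2 hBεP0 (by positivity)
      _ = 4 * B ^ 2 * ε ^ 2 := by ring
  have hDid : D * ε ^ 2 = B * L * ε ^ 2 + 4 * B ^ 2 * ε ^ 2 := by rw [hD]; ring
  have he3 : B * ε * P ≤ B * ε + B * L * ε ^ 2 := by
    have h1 := mul_le_mul_of_nonneg_left hPL hBε0
    nlinarith only [h1]
  have hkey2 : B * ε * P ≤ (B * ε + D * ε ^ 2) * (1 - B * ε * P) := by nlinarith only [he3, he4, hDid]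
  -- conclude
  rw [norm_sub_rev]
  calc ‖φ ε t - ((ε ^ α : ℝ) : ℂ) • U t φ₀‖ ≤ B * a * ε * P := hdiff
    _ ≤ (B * ε + D * ε ^ 2) * (a * (1 - B * ε * P)) := by
        have h1 := mul_le_mul_of_nonneg_left hkey2 ha0.le
        nlinarith only [h1]
    _ ≤ (B * ε + D * ε ^ 2) * ‖φ ε t‖ := by
        apply mul_le_mul_of_nonneg_left hlow
        exact add_nonneg hBε0 (mul_nonneg hD0 (sq_nonneg ε))
end

section
/- Given 0 < r < 1, N > 0, and φ₀ ∈ H^s(ℝⁿ) with s > n/2 and ‖φ₀‖_{H^s} ≤ r N, there exists a unique solution (φ, ψ) ∈ C([0,T], H^s × H^s) of the exciton-polariton system iφ_t = −Δφ + γψ, iψ_t = (ω₀ + g|ψ|²)ψ + γφ with φ(0) = φ₀, ψ(0) = 0, subject to ‖φ‖, ‖ψ‖ ≤ N in C([0,T], H^s), where T = (1 − r)/(2γ + |g| K̃ N²) for a constant K̃ depending only on s, n. -/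
/-!
Banach's fixed point theorem for the Duhamel map `Φ` on the closed ball of radius `N` in
`C([0, T], E × E)`. Since `U` is isometric and `|e^{-iω₀t}| = 1`, each component of `Φ(φ, ψ)(t)`
differs from `U t φ₀` (resp. `0`) by an integral over `[0, t]` of a quantity of norm at most
`(|γ| + |g| K̃ N²) N`, and the cubic estimates make `Φ` Lipschitz on the ball with constant
`L = T (|γ| + |g| K̃ N²)`. For `T = (1 - r) / (2γ + |g| K̃ N²)` one gets `L ≤ 1 - r < 1` and
`‖φ₀‖ + L N ≤ N`, so `Φ` is a contraction of the ball. Its fixed points are exactly the solutions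
bounded by `N`, since the Duhamel integrals on `[0, t]` only see the solution on `[0, T]`.
-/

open Set MeasureTheory

/-- The property of being a solution of the exciton-polariton Duhamel system
`φ(t) = e^{itΔ}φ₀ − iγ∫₀ᵗ e^{i(t−τ)Δ}ψ(τ)dτ`,
`ψ(t) = −i∫₀ᵗ e^{−iω₀(t−τ)}(g|ψ|²ψ(τ) + γφ(τ))dτ`
on `[0,T]`, continuous and bounded by `Nb` in norm.  Here `U t` plays the role of the free
Schrödinger group `e^{itΔ}` on `H^s(ℝⁿ)` (`s > n/2`) and `Ncub u = |u|²u`. -/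
def IsEPSolution {E : Type*} [NormedAddCommGroup E] [NormedSpace ℂ E]
    (U : ℝ → E →ₗᵢ[ℂ] E) (Ncub : E → E) (γ g ω₀ Nb T : ℝ) (φ₀ : E)
    (φ ψ : ℝ → E) : Prop :=
  ContinuousOn φ (Icc 0 T) ∧ ContinuousOn ψ (Icc 0 T) ∧
  (∀ t ∈ Icc (0:ℝ) T, ‖φ t‖ ≤ Nb ∧ ‖ψ t‖ ≤ Nb) ∧
  (∀ t ∈ Icc (0:ℝ) T,
    φ t = U t φ₀ - (Complex.I * (γ : ℂ)) • ∫ τ in (0:ℝ)..t, U (t - τ) (ψ τ) ∧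
    ψ t = -(Complex.I) • ∫ τ in (0:ℝ)..t,
        Complex.exp (-(Complex.I) * (ω₀ : ℂ) * ((t - τ : ℝ) : ℂ)) •
          ((g : ℂ) • Ncub (ψ τ) + (γ : ℂ) • φ τ)) ∧
  φ 0 = φ₀ ∧ ψ 0 = 0

open Function

theorem existsUnique_isFixedPt_of_mapsTo_of_lipschitzOnWith {X : Type*} [MetricSpace X]
    {f : X → X} {s : Set X} (hs : IsComplete s) (hne : s.Nonempty) (hmaps : MapsTo f s s)
    {L : NNReal} (hL : L < 1) (hlip : LipschitzOnWith L f s) :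
    ∃! x, x ∈ s ∧ IsFixedPt f x := by
  have hc : ContractingWith L (hmaps.restrict f s s) := ⟨hL, hlip.mapsToRestrict hmaps⟩
  obtain ⟨x, hxs⟩ := hne
  obtain ⟨y, hys, hfix, -⟩ := hc.exists_fixedPoint' hs hmaps hxs (edist_ne_top _ _)
  refine ⟨y, ⟨hys, hfix⟩, fun z ⟨hzs, hz⟩ => ?_⟩
  exact congrArg Subtype.val (hc.fixedPoint_unique' (x := ⟨z, hzs⟩) (y := ⟨y, hys⟩)
    (Subtype.ext hz) (Subtype.ext hfix))

theorem intervalIntegral.norm_integral_zero_le {F : Type*} [NormedAddCommGroup F] [NormedSpace ℝ F]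
    {f : ℝ → F} {C : ℝ} (h : ∀ τ, ‖f τ‖ ≤ C) (t : ℝ) : ‖∫ τ in (0:ℝ)..t, f τ‖ ≤ C * |t| := by
  simpa using intervalIntegral.norm_integral_le_of_norm_le_const (a := 0) (b := t) fun τ _ => h τ

namespace ExcitonPolariton

open Complex

variable {E : Type*} [NormedAddCommGroup E] [NormedSpace ℂ E]

theorem norm_exp_smul (a b : ℝ) (v : E) : ‖exp (-I * a * b) • v‖ = ‖v‖ := by
  rw [norm_smul, Complex.norm_exp]
  simp

variable (U : ℝ → E →ₗᵢ[ℂ] E) (N : E → E) (γ g ω₀ : ℝ) (φ₀ : E)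

def forcing (v : E × E) : E := (g : ℂ) • N v.2 + (γ : ℂ) • v.1

noncomputable def duhamel (p : ℝ → E × E) (t : ℝ) : E × E :=
  (U t φ₀ - (I * (γ : ℂ)) • ∫ τ in (0:ℝ)..t, U (t - τ) (p τ).2,
    -I • ∫ τ in (0:ℝ)..t, exp (-I * (ω₀ : ℂ) * ((t - τ : ℝ) : ℂ)) • forcing N γ g (p τ))

variable {U N γ g ω₀ φ₀}

theorem norm_forcing_le {K R : ℝ} (hK : 0 ≤ K) (hNK : ∀ u, ‖N u‖ ≤ K * ‖u‖ ^ 3) {v : E × E}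
    (hv : ‖v‖ ≤ R) : ‖forcing N γ g v‖ ≤ (|g| * K * R ^ 2 + |γ|) * R := by
  have h₁ : ‖N v.2‖ ≤ K * R ^ 2 * R :=
    calc ‖N v.2‖ ≤ K * ‖v.2‖ ^ 3 := hNK v.2
      _ ≤ K * R ^ 3 := by gcongr; exact (norm_snd_le v).trans hv
      _ = K * R ^ 2 * R := by ring
  refine (norm_add_le _ _).trans ?_
  rw [norm_smul, norm_smul, norm_real, norm_real, Real.norm_eq_abs, Real.norm_eq_abs]
  have : |γ| * ‖v.1‖ ≤ |γ| * R := by gcongr; exact (norm_fst_le v).trans hv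
  have : |g| * ‖N v.2‖ ≤ |g| * (K * R ^ 2 * R) := by gcongr
  linarith

theorem norm_forcing_sub_le {K R : ℝ} (hK : 0 ≤ K)
    (hNK : ∀ u w, ‖N u - N w‖ ≤ K * (max ‖u‖ ‖w‖) ^ 2 * ‖u - w‖) {v w : E × E}
    (hv : ‖v‖ ≤ R) (hw : ‖w‖ ≤ R) :
    ‖forcing N γ g v - forcing N γ g w‖ ≤ (|g| * K * R ^ 2 + |γ|) * ‖v - w‖ := by
  have hsplit : forcing N γ g v - forcing N γ g w
      = (g : ℂ) • (N v.2 - N w.2) + (γ : ℂ) • (v - w).1 := by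
    simp only [forcing, Prod.fst_sub, smul_sub]
    abel
  have h₁ : ‖N v.2 - N w.2‖ ≤ K * R ^ 2 * ‖v - w‖ := by
    refine (hNK _ _).trans ?_
    gcongr
    · exact max_le ((norm_snd_le v).trans hv) ((norm_snd_le w).trans hw)
    · exact norm_snd_le (v - w)
  rw [hsplit]
  refine (norm_add_le _ _).trans ?_
  rw [norm_smul, norm_smul, norm_real, norm_real, Real.norm_eq_abs, Real.norm_eq_abs]
  have : |γ| * ‖(v - w).1‖ ≤ |γ| * ‖v - w‖ := by gcongr; exact norm_fst_le _
  have : |g| * ‖N v.2 - N w.2‖ ≤ |g| * (K * R ^ 2 * ‖v - w‖) := by gcongr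
  linarith

theorem continuous_propagated (hU : Continuous fun q : ℝ × E => U q.1 q.2) {f : ℝ → E}
    (hf : Continuous f) : Continuous fun q : ℝ × ℝ => U (q.1 - q.2) (f q.2) :=
  hU.comp ((continuous_fst.sub continuous_snd).prodMk (hf.comp continuous_snd))

theorem continuous_duhamel (hU : Continuous fun q : ℝ × E => U q.1 q.2) (hN : Continuous N)
    {p : ℝ → E × E} (hp : Continuous p) : Continuous (duhamel U N γ g ω₀ φ₀ p) := by
  refine .prodMk (.sub (hU.comp (continuous_id.prodMk continuous_const)) (.const_smul ?_ _))
    (.const_smul ?_ _)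
  · exact intervalIntegral.continuous_parametric_intervalIntegral_of_continuous
      (f := fun t τ => U (t - τ) (p τ).2)
      (continuous_propagated hU (continuous_snd.comp hp)) continuous_id
  · exact intervalIntegral.continuous_parametric_intervalIntegral_of_continuous
      (f := fun t τ => exp (-I * (ω₀ : ℂ) * ((t - τ : ℝ) : ℂ)) • forcing N γ g (p τ))
      (by unfold forcing; fun_prop) continuous_id

theorem duhamel_zero (hU0 : U 0 = .id) (p : ℝ → E × E) :
    duhamel U N γ g ω₀ φ₀ p 0 = (φ₀, 0) := by
  simp [duhamel, hU0]

theorem duhamel_congr {p q : ℝ → E × E} {t : ℝ} (ht : 0 ≤ t) (hpq : EqOn p q (Icc 0 t)) :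
    duhamel U N γ g ω₀ φ₀ p t = duhamel U N γ g ω₀ φ₀ q t := by
  rw [← uIcc_of_le ht] at hpq
  simp only [duhamel]
  congr 1
  · congr 2
    exact intervalIntegral.integral_congr fun τ hτ => by simp only [hpq hτ]
  · congr 1
    exact intervalIntegral.integral_congr fun τ hτ => by simp only [hpq hτ]

theorem norm_duhamel_le {K R : ℝ} (hK : 0 ≤ K) (hNK : ∀ u, ‖N u‖ ≤ K * ‖u‖ ^ 3)
    {p : ℝ → E × E} (hp : ∀ τ, ‖p τ‖ ≤ R) (t : ℝ) :
    ‖duhamel U N γ g ω₀ φ₀ p t‖ ≤ ‖φ₀‖ + |t| * (|γ| + |g| * K * R ^ 2) * R := by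
  have hR : 0 ≤ R := (norm_nonneg _).trans (hp 0)
  have hfst : ‖∫ τ in (0:ℝ)..t, U (t - τ) (p τ).2‖ ≤ R * |t| :=
    intervalIntegral.norm_integral_zero_le (fun τ =>
      ((U (t - τ)).norm_map _).trans_le ((norm_snd_le _).trans (hp τ))) t
  have hsnd : ‖∫ τ in (0:ℝ)..t, exp (-I * (ω₀ : ℂ) * ((t - τ : ℝ) : ℂ)) • forcing N γ g (p τ)‖
      ≤ (|g| * K * R ^ 2 + |γ|) * R * |t| :=
    intervalIntegral.norm_integral_zero_le (fun τ =>
      (norm_exp_smul _ _ _).trans_le (norm_forcing_le hK hNK (hp τ))) t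
  rw [duhamel, Prod.norm_mk]
  refine max_le ((norm_sub_le _ _).trans ?_) ?_
  · rw [LinearIsometry.norm_map, norm_smul, norm_mul, norm_I, one_mul, norm_real,
      Real.norm_eq_abs]
    have : 0 ≤ |t| * (|g| * K * R ^ 2) * R := by positivity
    nlinarith [abs_nonneg γ]
  · rw [norm_smul, norm_neg, norm_I, one_mul]
    nlinarith [norm_nonneg φ₀]

theorem norm_duhamel_sub_le (hU : Continuous fun q : ℝ × E => U q.1 q.2) (hN : Continuous N)
    {K R d : ℝ} (hK : 0 ≤ K) (hNK : ∀ u v, ‖N u - N v‖ ≤ K * (max ‖u‖ ‖v‖) ^ 2 * ‖u - v‖)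
    {p q : ℝ → E × E} (hpc : Continuous p) (hqc : Continuous q) (hp : ∀ τ, ‖p τ‖ ≤ R)
    (hq : ∀ τ, ‖q τ‖ ≤ R) (hpq : ∀ τ, ‖p τ - q τ‖ ≤ d) (t : ℝ) :
    ‖duhamel U N γ g ω₀ φ₀ p t - duhamel U N γ g ω₀ φ₀ q t‖
      ≤ |t| * (|γ| + |g| * K * R ^ 2) * d := by
  have hd : 0 ≤ d := (norm_nonneg _).trans (hpq 0)
  have hfree : ∀ {f : ℝ → E × E}, Continuous f →
      IntervalIntegrable (fun τ => U (t - τ) (f τ).2) volume 0 t := fun hf =>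
    ((continuous_propagated hU (continuous_snd.comp hf)).comp
      (Continuous.prodMk_right t)).intervalIntegrable _ _
  have hforced : ∀ {f : ℝ → E × E}, Continuous f → IntervalIntegrable
      (fun τ => exp (-I * (ω₀ : ℂ) * ((t - τ : ℝ) : ℂ)) • forcing N γ g (f τ)) volume 0 t :=
    fun hf => Continuous.intervalIntegrable (by unfold forcing; fun_prop) _ _
  have hfst : ‖∫ τ in (0:ℝ)..t, (U (t - τ) (q τ).2 - U (t - τ) (p τ).2)‖ ≤ d * |t| := by
    refine intervalIntegral.norm_integral_zero_le (fun τ => ?_) t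
    rw [← map_sub, LinearIsometry.norm_map, norm_sub_rev]
    exact (norm_snd_le (p τ - q τ)).trans (hpq τ)
  have hsnd : ‖∫ τ in (0:ℝ)..t, (exp (-I * (ω₀ : ℂ) * ((t - τ : ℝ) : ℂ)) • forcing N γ g (p τ)
      - exp (-I * (ω₀ : ℂ) * ((t - τ : ℝ) : ℂ)) • forcing N γ g (q τ))‖
      ≤ (|g| * K * R ^ 2 + |γ|) * d * |t| := by
    refine intervalIntegral.norm_integral_zero_le (fun τ => ?_) t
    rw [← smul_sub, norm_exp_smul]
    exact (norm_forcing_sub_le hK hNK (hp τ) (hq τ)).trans (by gcongr; exact hpq τ)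
  rw [duhamel, duhamel, Prod.mk_sub_mk, Prod.norm_mk, sub_sub_sub_cancel_left, ← smul_sub,
    ← smul_sub, ← intervalIntegral.integral_sub (hfree hqc) (hfree hpc),
    ← intervalIntegral.integral_sub (hforced hpc) (hforced hqc)]
  refine max_le ?_ ?_
  · rw [norm_smul, norm_mul, norm_I, one_mul, norm_real, Real.norm_eq_abs]
    have : 0 ≤ |t| * (|g| * K * R ^ 2) * d := by positivity
    nlinarith [abs_nonneg γ]
  · rw [norm_smul, norm_neg, norm_I, one_mul]
    exact hsnd.trans_eq (by ring)

section FixedPoint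

variable {T : ℝ} (hU : Continuous fun q : ℝ × E => U q.1 q.2) (hN : Continuous N) (hT : 0 ≤ T)

variable (γ g ω₀ φ₀) in
noncomputable def duhamelMap (p : C(Icc 0 T, E × E)) : C(Icc 0 T, E × E) :=
  ⟨fun t => duhamel U N γ g ω₀ φ₀ (ContinuousMap.IccExtend hT p) t,
    (continuous_duhamel hU hN (ContinuousMap.IccExtend hT p).continuous).comp
      continuous_subtype_val⟩

theorem mapsTo_duhamelMap {K R : ℝ} (hK : 0 ≤ K) (hNK : ∀ u, ‖N u‖ ≤ K * ‖u‖ ^ 3)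
    (hφ₀ : ‖φ₀‖ + T * (|γ| + |g| * K * R ^ 2) * R ≤ R) :
    MapsTo (duhamelMap γ g ω₀ φ₀ hU hN hT)
      (Metric.closedBall 0 R) (Metric.closedBall 0 R) := by
  intro p hp
  rw [mem_closedBall_zero_iff] at hp ⊢
  have hR : 0 ≤ R := (norm_nonneg _).trans hp
  refine (ContinuousMap.norm_le _ hR).2 fun t => ?_
  have ht : |(t : ℝ)| ≤ T := abs_le.2 ⟨by linarith [t.2.1, hT], t.2.2⟩
  refine (norm_duhamel_le hK hNK (fun τ => (p.norm_coe_le_norm _).trans hp) t).trans ?_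
  refine le_trans ?_ hφ₀
  gcongr

theorem lipschitzOnWith_duhamelMap {K R : ℝ} (hK : 0 ≤ K)
    (hNK : ∀ u v, ‖N u - N v‖ ≤ K * (max ‖u‖ ‖v‖) ^ 2 * ‖u - v‖) :
    LipschitzOnWith (T * (|γ| + |g| * K * R ^ 2)).toNNReal
      (duhamelMap γ g ω₀ φ₀ hU hN hT) (Metric.closedBall 0 R) := by
  refine LipschitzOnWith.of_dist_le_mul fun p hp q hq => ?_
  rw [mem_closedBall_zero_iff] at hp hq
  rw [Real.coe_toNNReal _ (by positivity), ContinuousMap.dist_le (by positivity)]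
  intro t
  have ht : |(t : ℝ)| ≤ T := abs_le.2 ⟨by linarith [t.2.1, hT], t.2.2⟩
  rw [dist_eq_norm]
  refine (norm_duhamel_sub_le hU hN hK hNK (ContinuousMap.IccExtend hT p).continuous
    (ContinuousMap.IccExtend hT q).continuous (fun τ => (p.norm_coe_le_norm _).trans hp)
    (fun τ => (q.norm_coe_le_norm _).trans hq)
    (fun τ => by rw [← dist_eq_norm]; exact p.dist_apply_le_dist (projIcc 0 T hT τ)) t).trans ?_
  have hR : 0 ≤ R := (norm_nonneg _).trans hp
  gcongr

theorem isEPSolution_of_isFixedPt (hU0 : U 0 = .id) {R : ℝ} {F : C(Icc 0 T, E × E)}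
    (hF : F ∈ Metric.closedBall 0 R) (hfix : IsFixedPt (duhamelMap γ g ω₀ φ₀ hU hN hT) F) :
    IsEPSolution U N γ g ω₀ R T φ₀ (fun t => (IccExtend hT F t).1)
      (fun t => (IccExtend hT F t).2) := by
  have hext : ∀ t ∈ Icc 0 T,
      IccExtend hT F t = duhamel U N γ g ω₀ φ₀ (ContinuousMap.IccExtend hT F) t := fun t ht => by
    rw [IccExtend_of_mem hT F ht]
    exact (DFunLike.congr_fun hfix ⟨t, ht⟩).symm
  have hF' := ContinuousMap.IccExtend hT F |>.continuous
  refine ⟨hF'.fst.continuousOn, hF'.snd.continuousOn, fun t ht => ?_, fun t ht => ?_, ?_⟩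
  · dsimp only
    rw [IccExtend_of_mem hT F ht]
    have := (F.norm_coe_le_norm ⟨t, ht⟩).trans (mem_closedBall_zero_iff.1 hF)
    exact ⟨(norm_fst_le _).trans this, (norm_snd_le _).trans this⟩
  · exact Prod.ext_iff.1 (hext t ht)
  · exact Prod.ext_iff.1 ((hext 0 ⟨le_rfl, hT⟩).trans (duhamel_zero hU0 _))

theorem IsEPSolution.exists_isFixedPt {R : ℝ} {φ ψ : ℝ → E}
    (hsol : IsEPSolution U N γ g ω₀ R T φ₀ φ ψ) :
    ∃ p : C(Icc 0 T, E × E), p ∈ Metric.closedBall 0 R ∧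
      IsFixedPt (duhamelMap γ g ω₀ φ₀ hU hN hT) p ∧
      ∀ t (ht : t ∈ Icc 0 T), p ⟨t, ht⟩ = (φ t, ψ t) := by
  obtain ⟨hφ, hψ, hbound, hduhamel, -⟩ := hsol
  let p : C(Icc 0 T, E × E) :=
    ⟨fun t => (φ t, ψ t), continuousOn_iff_continuous_domRestrict.1 (hφ.prodMk hψ)⟩
  have hR : 0 ≤ R := (norm_nonneg _).trans (hbound 0 ⟨le_rfl, hT⟩).1
  refine ⟨p, mem_closedBall_zero_iff.2 ((ContinuousMap.norm_le _ hR).2 fun t => ?_), ?_,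
    fun t ht => rfl⟩
  · exact max_le (hbound t t.2).1 (hbound t t.2).2
  · ext1 ⟨t, ht⟩
    have hcausal : duhamel U N γ g ω₀ φ₀ (ContinuousMap.IccExtend hT p) t
        = duhamel U N γ g ω₀ φ₀ (fun τ => (φ τ, ψ τ)) t :=
      duhamel_congr ht.1 fun τ hτ => IccExtend_of_mem hT p ⟨hτ.1, hτ.2.trans ht.2⟩
    exact hcausal.trans (Prod.ext (hduhamel t ht).1.symm (hduhamel t ht).2.symm)

end FixedPoint

end ExcitonPolariton

theorem stmt8_general {E : Type*} [NormedAddCommGroup E] [NormedSpace ℂ E] [CompleteSpace E]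
    (r Nb γ g ω₀ K K' : ℝ) (hr : 0 < r) (hr1 : r < 1) (hNb : 0 < Nb) (hγ : 0 < γ)
    (hK : 0 ≤ K)
    (U : ℝ → E →ₗᵢ[ℂ] E) (hU : Continuous fun q : ℝ × E => U q.1 q.2) (hU0 : U 0 = .id)
    (Ncub : E → E) (hNc : Continuous Ncub)
    (hKcub : ∀ u : E, ‖Ncub u‖ ≤ K * ‖u‖ ^ 3)
    (hKlip : ∀ u v : E, ‖Ncub u - Ncub v‖ ≤ K' * (max ‖u‖ ‖v‖) ^ 2 * ‖u - v‖)
    (φ₀ : E) (hφ₀ : ‖φ₀‖ ≤ r * Nb) :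
    ∃ φ ψ : ℝ → E,
      IsEPSolution U Ncub γ g ω₀ Nb ((1 - r) / (2 * γ + |g| * max K K' * Nb ^ 2)) φ₀ φ ψ ∧
      ∀ φ' ψ' : ℝ → E,
        IsEPSolution U Ncub γ g ω₀ Nb ((1 - r) / (2 * γ + |g| * max K K' * Nb ^ 2)) φ₀ φ' ψ' →
        ∀ t ∈ Icc (0:ℝ) ((1 - r) / (2 * γ + |g| * max K K' * Nb ^ 2)),
          φ' t = φ t ∧ ψ' t = ψ t := by
  open ExcitonPolariton in
  set T := (1 - r) / (2 * γ + |g| * max K K' * Nb ^ 2)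
  have hK₁ : 0 ≤ max K K' := le_max_of_le_left hK
  have hD : 0 < 2 * γ + |g| * max K K' * Nb ^ 2 := by positivity
  have hT : 0 ≤ T := div_nonneg (by linarith) hD.le
  have hL : T * (|γ| + |g| * max K K' * Nb ^ 2) ≤ 1 - r := by
    rw [abs_of_pos hγ, div_mul_eq_mul_div, div_le_iff₀ hD]
    nlinarith
  have hNK : ∀ u, ‖Ncub u‖ ≤ max K K' * ‖u‖ ^ 3 := fun u =>
    (hKcub u).trans (by gcongr; exact le_max_left _ _)
  have hNL : ∀ u v, ‖Ncub u - Ncub v‖ ≤ max K K' * (max ‖u‖ ‖v‖) ^ 2 * ‖u - v‖ := fun u v =>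
    (hKlip u v).trans (by gcongr; exact le_max_right _ _)
  obtain ⟨F, ⟨hF, hFfix⟩, huniq⟩ := existsUnique_isFixedPt_of_mapsTo_of_lipschitzOnWith
    Metric.isClosed_closedBall.isComplete ⟨0, Metric.mem_closedBall_self hNb.le⟩
    (mapsTo_duhamelMap hU hNc hT hK₁ hNK (by nlinarith))
    (Real.toNNReal_lt_one.2 (by linarith))
    (lipschitzOnWith_duhamelMap (φ₀ := φ₀) (γ := γ) (g := g) (ω₀ := ω₀) hU hNc hT hK₁ hNL)
  refine ⟨_, _, isEPSolution_of_isFixedPt hU hNc hT hU0 hF hFfix, fun φ' ψ' hsol t ht => ?_⟩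
  obtain ⟨p, hp, hpfix, hpφψ⟩ := hsol.exists_isFixedPt hU hNc hT
  rw [IccExtend_of_mem hT F ht, ← huniq p ⟨hp, hpfix⟩, hpφψ t ht]
  exact ⟨rfl, rfl⟩

/-- Existence and uniqueness for the exciton-polariton system: given `0 < r < 1`, `N > 0`,
and `φ₀` with `‖φ₀‖ ≤ r N`, there is a unique solution `(φ, ψ)` of the exciton-polariton
system with `φ(0) = φ₀`, `ψ(0) = 0`, subject to `‖φ‖, ‖ψ‖ ≤ N`, on `[0,T]` with
`T = (1 − r)/(2γ + |g| K̃ N²)`, `K̃ = max K K'` where `K, K'` are the cubic estimate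
constants of the Banach algebra `H^s(ℝⁿ)`, `s > n/2` (abstracted as `E`, with `U t = e^{itΔ}`
strongly continuous and isometric, and `Ncub u = |u|²u`). -/
theorem stmt8 {E : Type*} [NormedAddCommGroup E] [NormedSpace ℂ E] [CompleteSpace E]
    (r Nb γ g ω₀ K K' : ℝ) (hr : 0 < r) (hr1 : r < 1) (hNb : 0 < Nb) (hγ : 0 < γ)
    (hK : 0 ≤ K) (hK' : 0 ≤ K')
    (U : ℝ → E →ₗᵢ[ℂ] E) (hU : Continuous fun q : ℝ × E => U q.1 q.2) (hU0 : U 0 = .id)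
    (Ncub : E → E) (hNc : Continuous Ncub) (hN0 : Ncub 0 = 0)
    (hKcub : ∀ u : E, ‖Ncub u‖ ≤ K * ‖u‖ ^ 3)
    (hKlip : ∀ u v : E, ‖Ncub u - Ncub v‖ ≤ K' * (max ‖u‖ ‖v‖) ^ 2 * ‖u - v‖)
    (φ₀ : E) (hφ₀ : ‖φ₀‖ ≤ r * Nb) :
    ∃ φ ψ : ℝ → E,
      IsEPSolution U Ncub γ g ω₀ Nb ((1 - r) / (2 * γ + |g| * max K K' * Nb ^ 2)) φ₀ φ ψ ∧
      ∀ φ' ψ' : ℝ → E,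
        IsEPSolution U Ncub γ g ω₀ Nb ((1 - r) / (2 * γ + |g| * max K K' * Nb ^ 2)) φ₀ φ' ψ' →
        ∀ t ∈ Icc (0:ℝ) ((1 - r) / (2 * γ + |g| * max K K' * Nb ^ 2)),
          φ' t = φ t ∧ ψ' t = ψ t :=
  stmt8_general r Nb γ g ω₀ K K' hr hr1 hNb hγ hK U hU hU0 Ncub hNc hKcub hKlip φ₀ hφ₀
end

section
/- Suppose a continuous nonnegative function h on [0, T] satisfies h(t) ≤ a t + b t² sup_{τ≤t} h(τ) + c t sup_{τ≤t} h(τ)^p with p > 1 and a, b, c > 0. Then, for t small enough (so that 1 − b t² > 0 and the relevant polynomial has a positive root), setting η = (c t/(1 − b t²))^p and δ = a/(c) · (appropriate normalization), one has sup_{τ≤t} h(τ) ≤ η^{1/p} z₁(η, δ) where z₁ is the smaller positive root of η z^p − z + δ = 0; in particular h(t) ≤ a t (1 + O(t²) + O(t^p)) as t → 0. -/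
/-!
Write `S t = sup_{τ ≤ t} h τ`; it is continuous, vanishes at `0` and inherits the inequality
`S t ≤ a t + b t² S t + c t (S t)^p`. For `0 ≤ s ≤ t` this gives
`S s (1 - b t²) ≤ a t + c t (S s)^p`, so `w s = S s / β` with `β = c t / (1 - b t²)` satisfies
`Q(w s) ≥ 0` for `Q z = η z^p - z + a/c`, `η = β^p`. Since `Q` is strictly convex, it is
negative strictly between its roots `z₁ < z₂`, so the continuous path `w` starting at `w 0 = 0`
can never cross the gap `(z₁, z₂)` and ends below `z₁`.

For the asymptotics, `(S t)^p ≤ (S T)^(p-1) S t` makes the inequality linear in `S t`, giving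
`S t ≤ 2 a t` for small `t`; substituting back into the inequality for `h t` yields the bound.
-/

open Set

/-- The smaller positive root `z₁(η, δ)` of `η z^p − z + δ = 0`. -/
noncomputable def z1 (p η δ : ℝ) : ℝ := sInf {z : ℝ | 0 < z ∧ η * z ^ p - z + δ = 0}

noncomputable def runningSup (h : ℝ → ℝ) (t : ℝ) : ℝ := sSup (h '' Icc 0 t)

section RunningSup

variable {h : ℝ → ℝ} {s t T : ℝ}

lemma le_runningSup (hh : ContinuousOn h (Icc 0 t)) (hs : s ∈ Icc 0 t) :
    h s ≤ runningSup h t :=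
  hh.le_sSup_image_Icc hs

lemma runningSup_le {M : ℝ} (ht : 0 ≤ t) (hM : ∀ s ∈ Icc 0 t, h s ≤ M) :
    runningSup h t ≤ M :=
  csSup_le ((nonempty_Icc.2 ht).image h) (forall_mem_image.2 hM)

lemma runningSup_nonneg (hh : ContinuousOn h (Icc 0 t)) (ht : 0 ≤ t) (h0 : 0 ≤ h 0) :
    0 ≤ runningSup h t :=
  h0.trans (le_runningSup hh (left_mem_Icc.2 ht))

lemma runningSup_mono (hh : ContinuousOn h (Icc 0 t)) (hs : 0 ≤ s) (hst : s ≤ t) :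
    runningSup h s ≤ runningSup h t :=
  runningSup_le hs fun _ hr ↦ le_runningSup hh ⟨hr.1, hr.2.trans hst⟩

lemma continuousOn_runningSup (hT : 0 ≤ T) (hh : ContinuousOn h (Icc 0 T)) :
    ContinuousOn (runningSup h) (Icc 0 T) := by
  set H := IccExtend hT (domRestrict (Icc 0 T) h)
  have hH : Continuous H := continuous_IccExtend_iff.2 hh.domRestrict
  -- `runningSup h t` is the supremum of `u ↦ H (u t)` over the fixed compact set `[0, 1]`.
  have hcont : Continuous fun t ↦ sSup ((fun u ↦ H (u * t)) '' Icc 0 1) :=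
    isCompact_Icc.continuous_sSup (by fun_prop)
  refine hcont.continuousOn.congr fun t ht ↦ ?_
  change sSup _ = sSup _
  rw [← image_image H (· * t), image_mul_right_Icc zero_le_one ht.1, zero_mul, one_mul]
  refine congrArg sSup (EqOn.image_eq fun s hs ↦ ?_).symm
  exact IccExtend_of_mem _ _ ⟨hs.1, hs.2.trans ht.2⟩

lemma runningSup_le_of_forall_le {a b c p : ℝ} (ha : 0 ≤ a) (hb : 0 ≤ b) (hc : 0 ≤ c)
    (hp : 0 ≤ p) (ht : 0 ≤ t) (hh : ContinuousOn h (Icc 0 t)) (h0 : 0 ≤ h 0)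
    (hle : ∀ s ∈ Icc 0 t,
      h s ≤ a * s + b * s ^ 2 * runningSup h s + c * s * runningSup h s ^ p) :
    runningSup h t ≤ a * t + b * t ^ 2 * runningSup h t + c * t * runningSup h t ^ p := by
  refine runningSup_le ht fun s hs ↦ (hle s hs).trans ?_
  have hs0 := hs.1
  have hst := hs.2
  have hSs := runningSup_nonneg (hh.mono (Icc_subset_Icc_right hs.2)) hs.1 h0
  have hmono := runningSup_mono hh hs.1 hs.2
  gcongr

end RunningSup

noncomputable def rootPoly (p η δ x : ℝ) : ℝ := η * x ^ p - x + δ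

section RootStructure

variable {p η δ z : ℝ}

lemma strictConvexOn_rootPoly (hp : 1 < p) (hη : 0 < η) :
    StrictConvexOn ℝ (Ici 0) (rootPoly p η δ) := by
  have hlin : ConvexOn ℝ (Ici (0 : ℝ)) fun x : ℝ ↦ -x + δ :=
    (concaveOn_id (convex_Ici 0)).neg.add_const δ
  have hpow : StrictConvexOn ℝ (Ici 0) fun x : ℝ ↦ η * x ^ p :=
    ⟨convex_Ici 0, fun x hx y hy hxy a b ha hb hab ↦ by
      have := mul_lt_mul_of_pos_left ((strictConvexOn_rpow hp).2 hx hy hxy ha hb hab) hη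
      simp only [smul_eq_mul] at this ⊢
      linarith⟩
  exact (hpow.add_convexOn hlin).congr fun x _ ↦ by simp only [Pi.add_apply, rootPoly]; ring

lemma rootPoly_neg_of_mem_Ioo {r r' x : ℝ} (hp : 1 < p) (hη : 0 < η) (hr : 0 ≤ r)
    (hQr : rootPoly p η δ r = 0) (hQr' : rootPoly p η δ r' = 0) (hx : x ∈ Ioo r r') :
    rootPoly p η δ x < 0 := by
  have hrr' : r < r' := hx.1.trans hx.2
  simpa [hQr, hQr'] using (strictConvexOn_rootPoly (δ := δ) hp hη).lt_on_openSegment hr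
    (hr.trans hrr'.le) hrr'.ne (openSegment_eq_Ioo hrr' ▸ hx)

lemma z1_le (hz : 0 < z) (hQz : rootPoly p η δ z = 0) : z1 p η δ ≤ z :=
  csInf_le ⟨0, fun _ hx ↦ hx.1.le⟩ ⟨hz, hQz⟩

lemma z1_pos_and_rootPoly_eq_zero (hp : 0 ≤ p) (hη : 0 ≤ η) (hδ : 0 < δ) (hz : 0 < z)
    (hQz : rootPoly p η δ z = 0) :
    0 < z1 p η δ ∧ rootPoly p η δ (z1 p η δ) = 0 := by
  set R := {x : ℝ | 0 < x ∧ η * x ^ p - x + δ = 0}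
  -- Positive roots satisfy `x = δ + η x^p ≥ δ`, so `R` stays away from `0` and is closed.
  have hRδ : R ⊆ Ici δ := fun x hx ↦ by
    have : 0 ≤ η * x ^ p := mul_nonneg hη (Real.rpow_nonneg hx.1.le p)
    simp only [mem_Ici]; linarith [hx.2]
  have hR : R = Ici δ ∩ rootPoly p η δ ⁻¹' {0} :=
    Subset.antisymm (fun x hx ↦ ⟨hRδ hx, hx.2⟩) fun x hx ↦ ⟨hδ.trans_le hx.1, hx.2⟩
  have hclosed : IsClosed R := by
    rw [hR]
    exact isClosed_Ici.inter (isClosed_singleton.preimage (by unfold rootPoly; fun_prop))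
  exact hclosed.csInf_mem ⟨z, hz, hQz⟩ ⟨0, fun _ hx ↦ hx.1.le⟩

end RootStructure

lemma le_of_continuousOn_of_forall_notMem_Ioo {f : ℝ → ℝ} {a b r r' : ℝ} (hab : a ≤ b)
    (hf : ContinuousOn f (Icc a b)) (hfa : f a ≤ r) (hrr' : r < r')
    (hgap : ∀ x ∈ Icc a b, f x ∉ Ioo r r') : f b ≤ r := by
  by_contra! hfb
  set y := min (f b) ((r + r') / 2)
  have hy : y ∈ Ioo r r' :=
    ⟨lt_min hfb (by linarith), (min_le_right _ _).trans_lt (by linarith)⟩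
  obtain ⟨x, hx, hfx⟩ := intermediate_value_Icc hab hf ⟨hfa.trans hy.1.le, min_le_left _ _⟩
  exact hgap x hx (hfx ▸ hy)

lemma rootPoly_nonneg_of_le {a b c p s t x : ℝ} (ha : 0 ≤ a) (hb : 0 ≤ b) (hc : 0 < c)
    (ht : 0 < t) (hD : 0 < 1 - b * t ^ 2) (hs : s ∈ Icc 0 t) (hx : 0 ≤ x)
    (hxs : x ≤ a * s + b * s ^ 2 * x + c * s * x ^ p) :
    0 ≤ rootPoly p ((c * t / (1 - b * t ^ 2)) ^ p) (a / c)
      (x / (c * t / (1 - b * t ^ 2))) := by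
  set β := c * t / (1 - b * t ^ 2)
  have hβ : 0 < β := by positivity
  have hct : 0 < c * t := by positivity
  have hxt : x * (1 - b * t ^ 2) ≤ a * t + c * t * x ^ p := by
    have : b * s ^ 2 * x ≤ b * t ^ 2 * x := by gcongr; exacts [hs.1, hs.2]
    have : a * s + c * s * x ^ p ≤ a * t + c * t * x ^ p := by
      have := Real.rpow_nonneg hx p
      gcongr; exacts [hs.2, hs.2]
    linarith
  have hw : x / β * (c * t) = x * (1 - b * t ^ 2) := by
    simp only [β]; field_simp
  have hpow : β ^ p * (x / β) ^ p = x ^ p := by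
    rw [← Real.mul_rpow hβ.le (div_nonneg hx hβ.le), mul_div_cancel₀ _ hβ.ne']
  have hδ : a / c * (c * t) = a * t := by field_simp
  rw [rootPoly, hpow, ← mul_le_mul_iff_of_pos_right hct, zero_mul, add_mul, sub_mul, hw, hδ]
  linarith

theorem le_rpow_one_div_mul_z1 {S : ℝ → ℝ} {a b c p t z z' : ℝ} (hp : 1 < p) (ha : 0 < a)
    (hb : 0 ≤ b) (hc : 0 < c) (ht : 0 ≤ t) (hD : 0 < 1 - b * t ^ 2)
    (hS : ContinuousOn S (Icc 0 t)) (hS0 : S 0 = 0) (hnn : ∀ s ∈ Icc 0 t, 0 ≤ S s)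
    (hSle : ∀ s ∈ Icc 0 t, S s ≤ a * s + b * s ^ 2 * S s + c * s * S s ^ p)
    (hz : 0 < z) (hzz' : z < z')
    (hQz : rootPoly p ((c * t / (1 - b * t ^ 2)) ^ p) (a / c) z = 0)
    (hQz' : rootPoly p ((c * t / (1 - b * t ^ 2)) ^ p) (a / c) z' = 0) :
    S t ≤ ((c * t / (1 - b * t ^ 2)) ^ p) ^ (1 / p) *
      z1 p ((c * t / (1 - b * t ^ 2)) ^ p) (a / c) := by
  have hp0 : 0 < p := by linarith
  rcases ht.eq_or_lt with rfl | ht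
  · simp [hS0, Real.zero_rpow hp0.ne', Real.zero_rpow (inv_ne_zero hp0.ne')]
  set β := c * t / (1 - b * t ^ 2)
  have hβ : 0 < β := by positivity
  have hη : 0 < β ^ p := Real.rpow_pos_of_pos hβ p
  obtain ⟨hr, hQr⟩ := z1_pos_and_rootPoly_eq_zero hp0.le hη.le (div_pos ha hc) hz hQz
  have hw : S t / β ≤ z1 p (β ^ p) (a / c) := by
    refine le_of_continuousOn_of_forall_notMem_Ioo (f := fun s ↦ S s / β) ht.le
      (hS.div_const β) (by simp [hS0, hr.le]) ((z1_le hz hQz).trans_lt hzz') fun s hs hmem ↦ ?_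
    exact (rootPoly_nonneg_of_le ha.le hb hc ht hD hs (hnn s hs) (hSle s hs)).not_gt
      (rootPoly_neg_of_mem_Ioo hp hη hr.le hQr hQz' hmem)
  rw [← Real.rpow_mul hβ.le, mul_one_div_cancel hp0.ne', Real.rpow_one]
  exact (div_le_iff₀' hβ).1 hw

lemma rpow_le_rpow_sub_one_mul {x M p : ℝ} (hx : 0 ≤ x) (hxM : x ≤ M) (hp : 1 ≤ p) :
    x ^ p ≤ M ^ (p - 1) * x := by
  rcases hx.eq_or_lt with rfl | hx
  · simp [Real.zero_rpow (by linarith : p ≠ 0)]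
  calc x ^ p = x ^ (p - 1) * x := by rw [← Real.rpow_add_one hx.ne', sub_add_cancel]
    _ ≤ M ^ (p - 1) * x := by gcongr

lemma le_two_mul_of_le_add {a b c p t x M : ℝ} (hp : 1 ≤ p) (ht : 0 ≤ t) (hc : 0 ≤ c)
    (hx : 0 ≤ x) (hxM : x ≤ M) (hsmall : b * t ^ 2 + c * t * M ^ (p - 1) ≤ 1 / 2)
    (hxt : x ≤ a * t + b * t ^ 2 * x + c * t * x ^ p) :
    x ≤ 2 * a * t := by
  have hpow : c * t * x ^ p ≤ c * t * M ^ (p - 1) * x := by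
    rw [mul_assoc (c * t)]
    gcongr
    exact rpow_le_rpow_sub_one_mul hx hxM hp
  nlinarith

theorem exists_le_mul_one_add_of_le {h S : ℝ → ℝ} {T a b c p M : ℝ} (hp : 1 < p)
    (ha : 0 < a) (hb : 0 ≤ b) (hc : 0 ≤ c) (hM : 0 ≤ M) (hSM : ∀ t ∈ Icc 0 T, S t ≤ M)
    (hnn : ∀ t ∈ Icc 0 T, 0 ≤ S t)
    (hSle : ∀ t ∈ Icc 0 T, S t ≤ a * t + b * t ^ 2 * S t + c * t * S t ^ p)
    (hh : ∀ t ∈ Icc 0 T, h t ≤ a * t + b * t ^ 2 * S t + c * t * S t ^ p) :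
    ∃ C ≥ (0:ℝ), ∃ t₀ > (0:ℝ), ∀ t ∈ Icc (0:ℝ) (min t₀ T),
      h t ≤ a * t * (1 + C * t ^ 2 + C * t ^ p) := by
  set K := b + c * M ^ (p - 1)
  have hK : 0 ≤ K := by positivity
  set C := 2 * b + c * (2 * a) ^ p / a
  refine ⟨C, by positivity, 1 / (2 * K + 2), by positivity, fun t ht ↦ ?_⟩
  have htT : t ∈ Icc 0 T := ⟨ht.1, ht.2.trans (min_le_right _ _)⟩
  have ht0 := ht.1
  have hSt := hnn t htT
  have ht₀ : t * (2 * K + 2) ≤ 1 :=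
    (le_div_iff₀ (by positivity)).1 (ht.2.trans (min_le_left _ _))
  have hsmall : b * t ^ 2 + c * t * M ^ (p - 1) ≤ 1 / 2 := by
    nlinarith [mul_nonneg hK ht0, mul_nonneg hb ht0]
  have hS2 : S t ≤ 2 * a * t :=
    le_two_mul_of_le_add hp.le ht0 hc hSt (hSM t htT) hsmall (hSle t htT)
  calc h t ≤ a * t + b * t ^ 2 * S t + c * t * S t ^ p := hh t htT
    _ ≤ a * t + b * t ^ 2 * (2 * a * t) + c * t * (2 * a * t) ^ p := by gcongr
    _ = a * t * (1 + 2 * b * t ^ 2 + c * (2 * a) ^ p / a * t ^ p) := by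
      rw [Real.mul_rpow (by positivity) ht0]; field_simp
    _ ≤ a * t * (1 + C * t ^ 2 + C * t ^ p) := by
      gcongr
      · exact le_add_of_nonneg_right (by positivity)
      · exact le_add_of_nonneg_left (by positivity)

theorem stmt12_general (T p a b c : ℝ) (hT : 0 < T) (hp : 1 < p)
    (ha : 0 < a) (hb : 0 < b) (hc : 0 < c)
    (h : ℝ → ℝ) (hcont : ContinuousOn h (Icc 0 T))
    (h0 : h 0 = 0)
    (hineq : ∀ t ∈ Icc (0:ℝ) T,
      h t ≤ a * t + b * t ^ 2 * sSup ((fun τ => h τ) '' Icc (0:ℝ) t)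
        + c * t * (sSup ((fun τ => h τ) '' Icc (0:ℝ) t)) ^ p) :
    (∀ t ∈ Icc (0:ℝ) T, 1 - b * t ^ 2 > 0 →
      (∃ z z' : ℝ, 0 < z ∧ z < z' ∧
        (c * t / (1 - b * t ^ 2)) ^ p * z ^ p - z + a / c = 0 ∧
        (c * t / (1 - b * t ^ 2)) ^ p * z' ^ p - z' + a / c = 0) →
      sSup ((fun τ => h τ) '' Icc (0:ℝ) t)
        ≤ ((c * t / (1 - b * t ^ 2)) ^ p) ^ (1 / p) *
            z1 p ((c * t / (1 - b * t ^ 2)) ^ p) (a / c)) ∧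
    (∃ C ≥ (0:ℝ), ∃ t₀ > (0:ℝ), ∀ t ∈ Icc (0:ℝ) (min t₀ T),
      h t ≤ a * t * (1 + C * t ^ 2 + C * t ^ p)) := by
  have hineq' : ∀ t ∈ Icc 0 T, h t ≤
      a * t + b * t ^ 2 * runningSup h t + c * t * runningSup h t ^ p := hineq
  have hcontOn : ∀ t ∈ Icc 0 T, ContinuousOn h (Icc 0 t) := fun t ht ↦
    hcont.mono (Icc_subset_Icc_right ht.2)
  have hSnn : ∀ t ∈ Icc 0 T, 0 ≤ runningSup h t := fun t ht ↦
    runningSup_nonneg (hcontOn t ht) ht.1 h0.ge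
  have hSle : ∀ t ∈ Icc 0 T, runningSup h t ≤
      a * t + b * t ^ 2 * runningSup h t + c * t * runningSup h t ^ p := fun t ht ↦
    runningSup_le_of_forall_le ha.le hb.le hc.le (by linarith) ht.1 (hcontOn t ht) h0.ge
      fun s hs ↦ hineq' s ⟨hs.1, hs.2.trans ht.2⟩
  refine ⟨fun t ht hD ⟨z, z', hz, hzz', hQz, hQz'⟩ ↦ ?_, ?_⟩
  · have hsub : Icc 0 t ⊆ Icc 0 T := Icc_subset_Icc_right ht.2
    exact le_rpow_one_div_mul_z1 hp ha hb.le hc ht.1 hD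
      ((continuousOn_runningSup hT.le hcont).mono hsub) (by simp [runningSup, h0])
      (fun s hs ↦ hSnn s (hsub hs)) (fun s hs ↦ hSle s (hsub hs)) hz hzz' hQz hQz'
  · exact exists_le_mul_one_add_of_le hp ha hb.le hc.le (hSnn T (right_mem_Icc.2 hT.le))
      (fun t ht ↦ runningSup_mono hcont ht.1 ht.2) hSnn hSle hineq'

/-- Nonlinear Gronwall-type bound: if a continuous nonnegative `h` on `[0,T]` with `h(0) = 0`
satisfies `h(t) ≤ a t + b t² sup_{τ≤t} h(τ) + c t (sup_{τ≤t} h(τ))^p`, `p > 1`, `a, b, c > 0`,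
then for small `t` (so that `1 − b t² > 0` and the polynomial `η z^p − z + δ` with
`η = (c t/(1 − b t²))^p`, `δ = a/c` has two positive roots) one has
`sup_{τ≤t} h(τ) ≤ η^{1/p} z₁(η, δ)`; in particular `h(t) ≤ a t (1 + O(t²) + O(t^p))`
as `t → 0`. -/
theorem stmt12 (T p a b c : ℝ) (hT : 0 < T) (hp : 1 < p)
    (ha : 0 < a) (hb : 0 < b) (hc : 0 < c)
    (h : ℝ → ℝ) (hcont : ContinuousOn h (Icc 0 T))
    (hnn : ∀ t ∈ Icc (0:ℝ) T, 0 ≤ h t) (h0 : h 0 = 0)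
    (hineq : ∀ t ∈ Icc (0:ℝ) T,
      h t ≤ a * t + b * t ^ 2 * sSup ((fun τ => h τ) '' Icc (0:ℝ) t)
        + c * t * (sSup ((fun τ => h τ) '' Icc (0:ℝ) t)) ^ p) :
    (∀ t ∈ Icc (0:ℝ) T, 1 - b * t ^ 2 > 0 →
      (∃ z z' : ℝ, 0 < z ∧ z < z' ∧
        (c * t / (1 - b * t ^ 2)) ^ p * z ^ p - z + a / c = 0 ∧
        (c * t / (1 - b * t ^ 2)) ^ p * z' ^ p - z' + a / c = 0) →
      sSup ((fun τ => h τ) '' Icc (0:ℝ) t)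
        ≤ ((c * t / (1 - b * t ^ 2)) ^ p) ^ (1 / p) *
            z1 p ((c * t / (1 - b * t ^ 2)) ^ p) (a / c)) ∧
    (∃ C ≥ (0:ℝ), ∃ t₀ > (0:ℝ), ∀ t ∈ Icc (0:ℝ) (min t₀ T),
      h t ≤ a * t * (1 + C * t ^ 2 + C * t ^ p)) :=
  stmt12_general T p a b c hT hp ha hb hc h hcont h0 hineq
end

section
/- Let (φ, ψ) solve the exciton-polariton system for t ≥ t₁ and (φ̃, ψ̃) solve the linear exciton system B (iφ̃_t = −Δφ̃ + γψ̃, iψ̃_t = ω₀ψ̃ + γφ̃) with initial data at t₁ differing from (φ, ψ) by (φ̂₀, ψ̂₀). Then for t₁ ≤ t with ½γ²(t − t₁)² < 1, sup_{t₁≤τ≤t} ‖ψ̂(τ)‖_{H^s} ≤ (1 − ½γ²(t−t₁)²)^{−1}(‖ψ̂₀‖ + γ(t−t₁)‖φ̂₀‖ + |g|K_p(t−t₁) sup_{t₁≤τ≤t}‖ψ(τ)‖_{H^s}^p), where ψ̂ = ψ̃ − ψ. -/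
open Set MeasureTheory

/-!
Taking norms in the two Duhamel formulas (the propagators are isometries) gives coupled
integral inequalities `‖φ̂(τ)‖ ≤ ‖φ̂₀‖ + γ ∫ ‖ψ̂‖` and
`‖ψ̂(σ)‖ ≤ ‖ψ̂₀‖ + γ ∫ ‖φ̂‖ + (nonlinear term)`. Feeding the first into the second bounds `‖ψ̂‖` by
a polynomial in `σ - t₁` in which `M = sup ‖ψ̂‖` appears through `γ²M/2`; solving for `M` gives
the factor `(1 - γ²(t - t₁)²/2)⁻¹`. The nonlinear term enters multiplied by `γ (t - t₁)`, which
need not be `≤ 1`; a second round of the substitution makes the polynomial inequality for `M`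
close on the whole range `γ²(t - t₁)² < 2`.
-/

lemma integral_le_of_le_cubic {f : ℝ → ℝ} {a b c₀ c₁ c₂ c₃ : ℝ} (hab : a ≤ b)
    (hf : IntervalIntegrable f volume a b)
    (hle : ∀ x ∈ Icc a b, f x ≤ c₀ + c₁ * (x - a) + c₂ * (x - a) ^ 2 + c₃ * (x - a) ^ 3) :
    ∫ x in a..b, f x
      ≤ c₀ * (b - a) + c₁ * (b - a) ^ 2 / 2 + c₂ * (b - a) ^ 3 / 3 + c₃ * (b - a) ^ 4 / 4 := by
  have hP : IntervalIntegrable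
      (fun x => c₀ + c₁ * (x - a) + c₂ * (x - a) ^ 2 + c₃ * (x - a) ^ 3) volume a b :=
    (by fun_prop : Continuous _).intervalIntegrable _ _
  have hprim : ∀ x ∈ uIcc a b, HasDerivAt
      (fun y => c₀ * (y - a) + c₁ * (y - a) ^ 2 / 2 + c₂ * (y - a) ^ 3 / 3 + c₃ * (y - a) ^ 4 / 4)
      (c₀ + c₁ * (x - a) + c₂ * (x - a) ^ 2 + c₃ * (x - a) ^ 3) x := by
    intro x _
    have hx : HasDerivAt (fun y : ℝ => y - a) 1 x := (hasDerivAt_id x).sub_const a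
    refine ((((hx.const_mul c₀).add (((hx.pow 2).const_mul c₁).div_const 2)).add
      (((hx.pow 3).const_mul c₂).div_const 3)).add
      (((hx.pow 4).const_mul c₃).div_const 4)).congr_deriv ?_
    push_cast
    ring
  calc ∫ x in a..b, f x
      ≤ ∫ x in a..b, (c₀ + c₁ * (x - a) + c₂ * (x - a) ^ 2 + c₃ * (x - a) ^ 3) :=
        intervalIntegral.integral_mono_on hab hf hP hle
    _ = _ := by rw [intervalIntegral.integral_eq_sub_of_hasDerivAt hprim hP]; ring

section CoupledIntegralInequality

variable {u v : ℝ → ℝ} {t₁ t a b γ d : ℝ}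

lemma le_quartic_of_le_quadratic (hγ : 0 ≤ γ)
    (hu : ContinuousOn u (Icc t₁ t)) (hv : ContinuousOn v (Icc t₁ t))
    (hvu : ∀ τ ∈ Icc t₁ t, v τ ≤ b + γ * ∫ σ in t₁..τ, u σ)
    (huv : ∀ σ ∈ Icc t₁ t, u σ ≤ a + γ * (∫ τ in t₁..σ, v τ) + γ * d * (σ - t₁) ^ 2)
    {c₀ c₁ c₂ : ℝ} (hc : ∀ σ ∈ Icc t₁ t, u σ ≤ c₀ + c₁ * (σ - t₁) + c₂ * (σ - t₁) ^ 2) :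
    ∀ σ ∈ Icc t₁ t, u σ ≤ a + γ * b * (σ - t₁) + (γ ^ 2 * c₀ / 2 + γ * d) * (σ - t₁) ^ 2
      + γ ^ 2 * c₁ / 6 * (σ - t₁) ^ 3 + γ ^ 2 * c₂ / 12 * (σ - t₁) ^ 4 := by
  have hsub : ∀ σ ∈ Icc t₁ t, uIcc t₁ σ ⊆ Icc t₁ t := fun σ hσ => by
    rw [uIcc_of_le hσ.1]; exact Icc_subset_Icc_right hσ.2
  have hv' : ∀ τ ∈ Icc t₁ t,
      v τ ≤ b + γ * c₀ * (τ - t₁) + γ * c₁ / 2 * (τ - t₁) ^ 2 + γ * c₂ / 3 * (τ - t₁) ^ 3 := by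
    intro τ hτ
    have hint := integral_le_of_le_cubic (c₀ := c₀) (c₁ := c₁) (c₂ := c₂) (c₃ := 0) hτ.1
      (hu.mono (hsub τ hτ)).intervalIntegrable
      fun σ hσ => (hc σ ⟨hσ.1, hσ.2.trans hτ.2⟩).trans_eq (by ring)
    nlinarith [hvu τ hτ, mul_le_mul_of_nonneg_left hint hγ]
  intro σ hσ
  have hint := integral_le_of_le_cubic hσ.1 (hv.mono (hsub σ hσ)).intervalIntegrable
    fun τ hτ => hv' τ ⟨hτ.1, hτ.2.trans hσ.2⟩
  nlinarith [huv σ hσ, mul_le_mul_of_nonneg_left hint hγ]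

lemma one_sub_sq_div_two_mul_le_of_le_quartic {x a q r M : ℝ}
    (ha : 0 ≤ a) (hq : 0 ≤ q) (hr : 0 ≤ r) (hx0 : 0 ≤ x) (hx2 : x ^ 2 < 2)
    (h : M ≤ a * (1 + x ^ 2 / 2) + q * (1 + x ^ 2 / 6) + r * x * (1 + x ^ 2 / 12)
      + x ^ 4 / 24 * M) :
    (1 - x ^ 2 / 2) * M ≤ a + q + r := by
  have hpos : 0 < 1 - x ^ 4 / 24 := by nlinarith
  have hA : (1 + x ^ 2 / 2) * (1 - x ^ 2 / 2) ≤ 1 - x ^ 4 / 24 := by nlinarith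
  have hB : (1 + x ^ 2 / 6) * (1 - x ^ 2 / 2) ≤ 1 - x ^ 4 / 24 := by nlinarith
  have hC : x * (1 + x ^ 2 / 12) * (1 - x ^ 2 / 2) ≤ 1 - x ^ 4 / 24 := by
    nlinarith [mul_nonneg hx0 (sq_nonneg (x - 1)), mul_nonneg hx0 (sq_nonneg (x ^ 2 - 1))]
  have hM : (1 - x ^ 4 / 24) * ((1 - x ^ 2 / 2) * M) ≤ (1 - x ^ 4 / 24) * (a + q + r) := by
    nlinarith [mul_le_mul_of_nonneg_left hA ha, mul_le_mul_of_nonneg_left hB hq,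
      mul_le_mul_of_nonneg_left hC hr]
  exact le_of_mul_le_mul_left hM hpos

theorem sSup_le_of_coupled_integral_le (hγ : 0 ≤ γ) (ha : 0 ≤ a) (hb : 0 ≤ b) (hd : 0 ≤ d)
    (ht : t₁ ≤ t) (hsmall : γ ^ 2 * (t - t₁) ^ 2 / 2 < 1) (hu0 : ∀ σ ∈ Icc t₁ t, 0 ≤ u σ)
    (hu : ContinuousOn u (Icc t₁ t)) (hv : ContinuousOn v (Icc t₁ t))
    (hvu : ∀ τ ∈ Icc t₁ t, v τ ≤ b + γ * ∫ σ in t₁..τ, u σ)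
    (huv : ∀ σ ∈ Icc t₁ t, u σ ≤ a + γ * (∫ τ in t₁..σ, v τ) + γ * d * (σ - t₁) ^ 2) :
    sSup (u '' Icc t₁ t)
      ≤ (1 - γ ^ 2 * (t - t₁) ^ 2 / 2)⁻¹ * (a + γ * (t - t₁) * b + (t - t₁) * d) := by
  set M := sSup (u '' Icc t₁ t)
  have hbdd : BddAbove (u '' Icc t₁ t) := isCompact_Icc.bddAbove_image hu
  have huM : ∀ σ ∈ Icc t₁ t, u σ ≤ M := fun σ hσ => le_csSup hbdd (mem_image_of_mem u hσ)
  have hM0 : 0 ≤ M := (hu0 t₁ (left_mem_Icc.2 ht)).trans (huM t₁ (left_mem_Icc.2 ht))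
  have hround₁ := le_quartic_of_le_quadratic hγ hu hv hvu huv (c₀ := M) (c₁ := 0) (c₂ := 0)
    fun σ hσ => (huM σ hσ).trans_eq (by ring)
  have hround₂ := le_quartic_of_le_quadratic hγ hu hv hvu huv
    (c₀ := a) (c₁ := γ * b) (c₂ := γ ^ 2 * M / 2 + γ * d)
    fun σ hσ => (hround₁ σ hσ).trans_eq (by ring)
  have hMle : M ≤ a + γ * b * (t - t₁) + (γ ^ 2 * a / 2 + γ * d) * (t - t₁) ^ 2
      + γ ^ 2 * (γ * b) / 6 * (t - t₁) ^ 3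
      + γ ^ 2 * (γ ^ 2 * M / 2 + γ * d) / 12 * (t - t₁) ^ 4 := by
    refine csSup_le ((nonempty_Icc.2 ht).image u) ?_
    rintro _ ⟨σ, hσ, rfl⟩
    refine (hround₂ σ hσ).trans ?_
    have hs : 0 ≤ σ - t₁ := sub_nonneg.2 hσ.1
    have hst : σ - t₁ ≤ t - t₁ := sub_le_sub_right hσ.2 t₁
    gcongr
  have hx0 : 0 ≤ γ * (t - t₁) := mul_nonneg hγ (sub_nonneg.2 ht)
  have key := one_sub_sq_div_two_mul_le_of_le_quartic (M := M) ha (mul_nonneg hx0 hb)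
    (mul_nonneg (sub_nonneg.2 ht) hd) hx0 (by nlinarith) (by nlinarith)
  rw [inv_mul_eq_div, le_div_iff₀ (by linarith)]
  linarith

end CoupledIntegralInequality

section Duhamel

variable {E : Type*} [NormedAddCommGroup E] [NormedSpace ℂ E]

lemma norm_exp_neg_I_mul_ofReal_mul_ofReal (ω₀ r : ℝ) :
    ‖Complex.exp (-(Complex.I) * (ω₀ : ℂ) * (r : ℂ))‖ = 1 := by
  rw [Complex.norm_exp]
  simp

lemma norm_I_mul_ofReal (x : ℝ) : ‖Complex.I * (x : ℂ)‖ = |x| := by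
  simp

lemma norm_isometry_duhamel_le (U : ℝ → E →ₗᵢ[ℂ] E) {γ t₁ τ : ℝ} (hγ : 0 ≤ γ) (hτ : t₁ ≤ τ)
    (x₀ : E) (f : ℝ → E) :
    ‖U (τ - t₁) x₀ - (Complex.I * (γ : ℂ)) • ∫ σ in t₁..τ, U (τ - σ) (f σ)‖
      ≤ ‖x₀‖ + γ * ∫ σ in t₁..τ, ‖f σ‖ := by
  calc _ ≤ ‖U (τ - t₁) x₀‖ + ‖(Complex.I * (γ : ℂ)) • ∫ σ in t₁..τ, U (τ - σ) (f σ)‖ :=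
        norm_sub_le _ _
    _ ≤ ‖x₀‖ + γ * ∫ σ in t₁..τ, ‖U (τ - σ) (f σ)‖ := by
        rw [(U _).norm_map, norm_smul, norm_I_mul_ofReal, abs_of_nonneg hγ]
        gcongr
        exact intervalIntegral.norm_integral_le_integral_norm hτ
    _ = _ := by simp only [LinearIsometry.norm_map]

/-- `∫ τ in t₁..σ, …` extends to the end of the expression, so the second integral lies inside
the first one, where it is constant in `τ`. -/
lemma norm_phase_duhamel_le {ω₀ γ g K t₁ σ : ℝ} (hγ : 0 ≤ γ) (hσ : t₁ ≤ σ) (y₀ : E)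
    {f F : ℝ → E} (hf : ContinuousOn f (Icc t₁ σ)) (hF : ∀ τ ∈ Ioc t₁ σ, ‖F τ‖ ≤ K) :
    ‖Complex.exp (-(Complex.I) * (ω₀ : ℂ) * ((σ - t₁ : ℝ) : ℂ)) • y₀
        - (Complex.I * (γ : ℂ)) • ∫ τ in t₁..σ,
            Complex.exp (-(Complex.I) * (ω₀ : ℂ) * ((σ - τ : ℝ) : ℂ)) • f τ
        + (Complex.I * (g : ℂ)) • ∫ τ in t₁..σ,
            Complex.exp (-(Complex.I) * (ω₀ : ℂ) * ((σ - τ : ℝ) : ℂ)) • F τ‖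
      ≤ ‖y₀‖ + γ * (∫ τ in t₁..σ, ‖f τ‖) + γ * (|g| * K) * (σ - t₁) ^ 2 := by
  set c := (Complex.I * (g : ℂ)) • ∫ τ in t₁..σ,
    Complex.exp (-(Complex.I) * (ω₀ : ℂ) * ((σ - τ : ℝ) : ℂ)) • F τ
  have hc : ‖c‖ ≤ |g| * K * (σ - t₁) := by
    rw [norm_smul, norm_I_mul_ofReal, mul_assoc]
    gcongr
    refine (intervalIntegral.norm_integral_le_of_norm_le_const fun τ hτ => ?_).trans_eq
      (by rw [abs_of_nonneg (sub_nonneg.2 hσ)])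
    rw [uIoc_of_le hσ] at hτ
    rw [norm_smul, norm_exp_neg_I_mul_ofReal_mul_ofReal, one_mul]
    exact hF τ hτ
  have hint : ‖∫ τ in t₁..σ, Complex.exp (-(Complex.I) * (ω₀ : ℂ) * ((σ - τ : ℝ) : ℂ)) • f τ + c‖
      ≤ (∫ τ in t₁..σ, ‖f τ‖) + (σ - t₁) * ‖c‖ := by
    have hfi : IntervalIntegrable (fun τ => ‖f τ‖) volume t₁ σ :=
      hf.norm.intervalIntegrable_of_Icc hσ
    have hci : IntervalIntegrable (fun _ => ‖c‖) volume t₁ σ := intervalIntegrable_const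
    refine (intervalIntegral.norm_integral_le_of_norm_le hσ
      (Filter.Eventually.of_forall fun τ _ => ?_) (hfi.add hci)).trans_eq ?_
    · rw [← one_mul ‖f τ‖, ← norm_exp_neg_I_mul_ofReal_mul_ofReal ω₀ (σ - τ), ← norm_smul]
      exact norm_add_le _ _
    · rw [intervalIntegral.integral_add hfi hci, intervalIntegral.integral_const, smul_eq_mul]
  calc _ ≤ ‖y₀‖ + γ * ((∫ τ in t₁..σ, ‖f τ‖) + (σ - t₁) * ‖c‖) := by
        refine (norm_sub_le _ _).trans ?_
        rw [norm_smul, norm_exp_neg_I_mul_ofReal_mul_ofReal, one_mul, norm_smul,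
          norm_I_mul_ofReal, abs_of_nonneg hγ]
        gcongr
    _ ≤ ‖y₀‖ + γ * ((∫ τ in t₁..σ, ‖f τ‖) + (σ - t₁) * (|g| * K * (σ - t₁))) := by gcongr
    _ = _ := by ring

end Duhamel

/-- `E` models `H^s(ℝⁿ)` with `s > n/2`, `U t` the Schrödinger group `e^{itΔ}` and `N u` the
nonlinearity `|u|^{p-1}u`. -/
theorem stmt14_general {E : Type*} [NormedAddCommGroup E] [NormedSpace ℂ E]
    (p γ g ω₀ Kp t₁ T : ℝ) (hp : 1 < p) (hγ : 0 < γ) (hKp : 0 ≤ Kp)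
    (U : ℝ → E →ₗᵢ[ℂ] E) (N : E → E) (hN : ∀ u : E, ‖N u‖ ≤ Kp * ‖u‖ ^ p)
    (φhat₀ ψhat₀ : E)
    (ψ φhat ψhat : ℝ → E)
    (hψc : ContinuousOn ψ (Icc t₁ T))
    (hφhc : ContinuousOn φhat (Icc t₁ T)) (hψhc : ContinuousOn ψhat (Icc t₁ T))
    (hDuhφh : ∀ t ∈ Icc t₁ T,
      φhat t = U (t - t₁) φhat₀
        - (Complex.I * (γ : ℂ)) • ∫ τ in t₁..t, U (t - τ) (ψhat τ))
    (hDuhψh : ∀ t ∈ Icc t₁ T,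
      ψhat t = Complex.exp (-(Complex.I) * (ω₀ : ℂ) * ((t - t₁ : ℝ) : ℂ)) • ψhat₀
        - (Complex.I * (γ : ℂ)) • ∫ τ in t₁..t,
            Complex.exp (-(Complex.I) * (ω₀ : ℂ) * ((t - τ : ℝ) : ℂ)) • φhat τ
        + (Complex.I * (g : ℂ)) • ∫ τ in t₁..t,
            Complex.exp (-(Complex.I) * (ω₀ : ℂ) * ((t - τ : ℝ) : ℂ)) • N (ψ τ)) :
    ∀ t ∈ Icc t₁ T, γ ^ 2 * (t - t₁) ^ 2 / 2 < 1 →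
      sSup ((fun τ => ‖ψhat τ‖) '' Icc t₁ t)
        ≤ (1 - γ ^ 2 * (t - t₁) ^ 2 / 2)⁻¹ *
            (‖ψhat₀‖ + γ * (t - t₁) * ‖φhat₀‖
              + |g| * Kp * (t - t₁) * (sSup ((fun τ => ‖ψ τ‖) '' Icc t₁ t)) ^ p) := by
  intro t ht hsmall
  have hsub : Icc t₁ t ⊆ Icc t₁ T := Icc_subset_Icc_right ht.2
  set S := sSup ((fun τ => ‖ψ τ‖) '' Icc t₁ t)
  have hψS : ∀ τ ∈ Icc t₁ t, ‖ψ τ‖ ≤ S := fun τ hτ =>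
    le_csSup (isCompact_Icc.bddAbove_image (hψc.mono hsub).norm) (mem_image_of_mem _ hτ)
  have hS : 0 ≤ S := (norm_nonneg _).trans (hψS t₁ (left_mem_Icc.2 ht.1))
  have hNψ : ∀ σ ∈ Icc t₁ t, ∀ τ ∈ Ioc t₁ σ, ‖N (ψ τ)‖ ≤ Kp * S ^ p := fun σ hσ τ hτ =>
    (hN _).trans <| mul_le_mul_of_nonneg_left (Real.rpow_le_rpow (norm_nonneg _)
      (hψS τ ⟨hτ.1.le, hτ.2.trans hσ.2⟩) (zero_le_one.trans hp.le)) hKp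
  refine (sSup_le_of_coupled_integral_le (a := ‖ψhat₀‖) (b := ‖φhat₀‖) (d := |g| * Kp * S ^ p)
    hγ.le (norm_nonneg _) (norm_nonneg _) (by positivity) ht.1 hsmall (fun _ _ => norm_nonneg _)
    (hψhc.mono hsub).norm (hφhc.mono hsub).norm (fun τ hτ => ?_) (fun σ hσ => ?_)).trans_eq
    (by ring)
  · rw [hDuhφh τ (hsub hτ)]
    exact norm_isometry_duhamel_le U hγ.le hτ.1 _ _
  · rw [hDuhψh σ (hsub hσ)]
    refine (norm_phase_duhamel_le hγ.le hσ.1 _ (hφhc.mono ?_) (hNψ σ hσ)).trans_eq (by ring)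
    exact Icc_subset_Icc_right (hσ.2.trans ht.2)

/-- Approximation B error bound: the differences `φ̂ = φ̃ − φ`, `ψ̂ = ψ̃ − ψ` between the
exciton-polariton solution and the solution of the linear exciton system B with data
`(φ̂₀, ψ̂₀)` at `t₁` satisfy, whenever `½γ²(t−t₁)² < 1`,
`sup_{t₁≤τ≤t}‖ψ̂(τ)‖ ≤ (1 − ½γ²(t−t₁)²)⁻¹(‖ψ̂₀‖ + γ(t−t₁)‖φ̂₀‖ + |g|K_p(t−t₁) sup_{t₁≤τ≤t}‖ψ(τ)‖^p)`.
Abstract setting: `E = H^s(ℝⁿ)`, `s > n/2`; `U t = e^{itΔ}` isometric;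
`N u = |u|^{p−1}u` with `‖N u‖ ≤ K_p‖u‖^p`; `φ̂, ψ̂` are given by their Duhamel formulas. -/
theorem stmt14 {E : Type*} [NormedAddCommGroup E] [NormedSpace ℂ E] [CompleteSpace E]
    (p γ g ω₀ Kp t₁ T : ℝ) (hp : 1 < p) (hγ : 0 < γ) (hKp : 0 ≤ Kp)
    (ht₁ : 0 ≤ t₁) (ht₁T : t₁ < T)
    (U : ℝ → E →ₗᵢ[ℂ] E) (N : E → E) (hN : ∀ u : E, ‖N u‖ ≤ Kp * ‖u‖ ^ p)
    (φhat₀ ψhat₀ : E)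
    (ψ φhat ψhat : ℝ → E)
    (hψc : ContinuousOn ψ (Icc t₁ T))
    (hφhc : ContinuousOn φhat (Icc t₁ T)) (hψhc : ContinuousOn ψhat (Icc t₁ T))
    (hIntU : ∀ t ∈ Icc t₁ T, IntervalIntegrable (fun τ => U (t - τ) (ψhat τ)) volume t₁ t)
    (hDuhφh : ∀ t ∈ Icc t₁ T,
      φhat t = U (t - t₁) φhat₀
        - (Complex.I * (γ : ℂ)) • ∫ τ in t₁..t, U (t - τ) (ψhat τ))
    (hDuhψh : ∀ t ∈ Icc t₁ T,
      ψhat t = Complex.exp (-(Complex.I) * (ω₀ : ℂ) * ((t - t₁ : ℝ) : ℂ)) • ψhat₀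
        - (Complex.I * (γ : ℂ)) • ∫ τ in t₁..t,
            Complex.exp (-(Complex.I) * (ω₀ : ℂ) * ((t - τ : ℝ) : ℂ)) • φhat τ
        + (Complex.I * (g : ℂ)) • ∫ τ in t₁..t,
            Complex.exp (-(Complex.I) * (ω₀ : ℂ) * ((t - τ : ℝ) : ℂ)) • N (ψ τ)) :
    ∀ t ∈ Icc t₁ T, γ ^ 2 * (t - t₁) ^ 2 / 2 < 1 →
      sSup ((fun τ => ‖ψhat τ‖) '' Icc t₁ t)
        ≤ (1 - γ ^ 2 * (t - t₁) ^ 2 / 2)⁻¹ *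
            (‖ψhat₀‖ + γ * (t - t₁) * ‖φhat₀‖
              + |g| * Kp * (t - t₁) * (sSup ((fun τ => ‖ψ τ‖) '' Icc t₁ t)) ^ p) :=
  stmt14_general p γ g ω₀ Kp t₁ T hp hγ hKp U N hN φhat₀ ψhat₀ ψ φhat ψhat hψc hφhc hψhc hDuhφh
    hDuhψh
end

section
/- Short-time theorem for the exciton-polariton system, regime A: with initial data φ(0) = φ̃(0) = ε^αφ₀ (‖φ₀‖_{H^s} = M) and ψ(0) = ψ̃(0) = 0, the relative error between the true photon field φ and the fully decoupled approximation φ̃ (solving iφ̃_t = −Δφ̃) satisfies ‖φ̃(t) − φ(t)‖_{H^s}/‖φ(t)‖_{H^s} ≤ ½γ²C₁²ε + O(ε^q) for 0 ≤ t ≤ C₁ε^{1/2}, where q = min{2, 1 + p/2 + α(p−1)} > 3/2. -/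
/-!
The exciton field starts at zero and is driven by the photon field, so on the window
`[0, C₁√ε]` a continuity (bootstrap) argument keeps `‖ψ(s)‖ ≤ 2γC₁√ε ‖φ(0)‖`; fed back into the
Duhamel formula this gives the linear growth `‖ψ(s)‖ ≤ κ s`. One more integration bounds the photon
error by `γκt²/2`, whose leading part is `½γ²t²‖φ(0)‖ ≤ ½γ²C₁²ε‖φ(0)‖`; the rest is `O(ε²)` from
the second-order coupling and `O(ε^{1+p/2+α(p-1)})` from the nonlinearity. Finally
`‖φ(0)‖ = ‖φ̃(t)‖` is traded for `‖φ(t)‖`, which differs from it by at most the error itself.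
-/

open Set MeasureTheory Filter Topology

theorem ContinuousOn.le_of_bootstrap {α δ : Type*} [ConditionallyCompleteLinearOrder α]
    [TopologicalSpace α] [OrderTopology α] [DenselyOrdered α] [LinearOrder δ] [TopologicalSpace δ]
    [OrderClosedTopology δ] {f : α → δ} {a b : α} {B : δ} (hf : ContinuousOn f (Icc a b))
    (ha : f a < B) (hstep : ∀ t ∈ Icc a b, (∀ τ ∈ Icc a t, f τ ≤ B) → f t < B) :
    ∀ t ∈ Icc a b, f t ≤ B := by
  by_contra! ⟨t₁, ht₁, hBt₁⟩
  have hclosed : IsClosed (Icc a b ∩ f ⁻¹' Ici B) :=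
    hf.preimage_isClosed_of_isClosed isClosed_Icc isClosed_Ici
  obtain ⟨c, ⟨hc, hBc⟩, hcmin⟩ :=
    (isCompact_Icc.of_isClosed_subset hclosed inter_subset_left).exists_isLeast
      ⟨t₁, ht₁, hBt₁.le⟩
  have hbelow : ∀ τ ∈ Ico a c, f τ < B := fun τ hτ =>
    not_le.1 fun h => (hcmin ⟨⟨hτ.1, hτ.2.le.trans hc.2⟩, h⟩).not_gt hτ.2
  -- by the intermediate value theorem, `f` first reaches `B` exactly at `c`
  obtain ⟨c', hc', hfc'⟩ :=
    intermediate_value_Icc hc.1 (hf.mono (Icc_subset_Icc_right hc.2)) ⟨ha.le, hBc⟩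
  have hc'c : c' = c := by
    by_contra hne
    exact (hbelow c' ⟨hc'.1, hc'.2.lt_of_ne hne⟩).ne hfc'
  have hall : ∀ τ ∈ Icc a c, f τ ≤ B := fun τ hτ =>
    hτ.2.eq_or_lt.elim (fun h => h ▸ hc'c ▸ hfc'.le) fun h => (hbelow τ ⟨hτ.1, h⟩).le
  exact (hstep c hc hall).not_ge hBc

section Duhamel

variable {E : Type*} [NormedAddCommGroup E] [NormedSpace ℂ E]

theorem norm_exp_neg_I_mul_smul (ω x : ℝ) (v : E) :
    ‖Complex.exp (-Complex.I * ω * x) • v‖ = ‖v‖ := by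
  rw [norm_smul, Complex.norm_exp]
  simp

theorem norm_I_mul_ofReal_smul (a : ℝ) (v : E) : ‖(Complex.I * a) • v‖ = |a| * ‖v‖ := by
  rw [norm_smul, norm_mul, Complex.norm_I, one_mul, Complex.norm_real, Real.norm_eq_abs]

theorem norm_intervalIntegral_le_mul {f : ℝ → E} {s B : ℝ} (hs : 0 ≤ s)
    (h : ∀ τ ∈ Ioc 0 s, ‖f τ‖ ≤ B) : ‖∫ τ in (0:ℝ)..s, f τ‖ ≤ B * s := by
  have := intervalIntegral.norm_integral_le_of_norm_le_const (by rwa [uIoc_of_le hs])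
  rwa [sub_zero, abs_of_nonneg hs] at this

structure IsDuhamelSolution (U : ℝ → E →ₗᵢ[ℂ] E) (N : E → E) (γ g ω₀ : ℝ) (u₀ : E)
    (φ ψ : ℝ → E) (T : ℝ) : Prop where
  continuousOn_exciton : ContinuousOn ψ (Icc 0 T)
  photon_eq : ∀ t ∈ Icc (0:ℝ) T,
    φ t = U t u₀ - (Complex.I * (γ : ℂ)) • ∫ τ in (0:ℝ)..t, U (t - τ) (ψ τ)
  exciton_eq : ∀ t ∈ Icc (0:ℝ) T,
    ψ t = -(Complex.I * (γ : ℂ)) • ∫ τ in (0:ℝ)..t,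
      (Complex.exp (-(Complex.I) * (ω₀ : ℂ) * ((t - τ : ℝ) : ℂ)) • φ τ
        - (Complex.I * (g : ℂ)) • ∫ σ in (0:ℝ)..t,
          Complex.exp (-(Complex.I) * (ω₀ : ℂ) * ((t - σ : ℝ) : ℂ)) • N (ψ σ))

noncomputable def excitonRate (γ g Kp p A B T : ℝ) : ℝ :=
  γ * (A + γ * B * T + |g| * Kp * B ^ p * T)

theorem excitonRate_nonneg {γ g Kp p A B T : ℝ} (hγ : 0 ≤ γ) (hKp : 0 ≤ Kp) (hA : 0 ≤ A)
    (hB : 0 ≤ B) (hT : 0 ≤ T) : 0 ≤ excitonRate γ g Kp p A B T := by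
  unfold excitonRate
  positivity

theorem excitonRate_mul_le {γ g Kp p A M T : ℝ} (hγ : 0 < γ) (hKp : 0 ≤ Kp) (hp : 1 ≤ p)
    (hA : 0 < A) (hAM : A ≤ M) (hT : 0 ≤ T) (hsmall₁ : γ ^ 2 * T ^ 2 ≤ 1 / 8)
    (hsmall₂ : γ * |g| * Kp * T ^ 2 * (2 * γ * T * M) ^ (p - 1) ≤ 1 / 8) :
    excitonRate γ g Kp p A (2 * γ * T * A) T * T ≤ 3 / 4 * (2 * γ * T * A) := by
  rcases hT.eq_or_lt with rfl | hT
  · simp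
  have hnonlin : γ * |g| * Kp * T ^ 2 * (2 * γ * T * A) ^ (p - 1) ≤ 1 / 8 := by
    refine le_trans ?_ hsmall₂
    gcongr
  have hB : 0 < 2 * γ * T * A := by positivity
  have hBp : (2 * γ * T * A) ^ p = (2 * γ * T * A) ^ (p - 1) * (2 * γ * T * A) := by
    rw [Real.rpow_sub_one hB.ne', div_mul_cancel₀ _ hB.ne']
  calc excitonRate γ g Kp p A (2 * γ * T * A) T * T
      = γ * T * A + γ ^ 2 * T ^ 2 * (2 * γ * T * A)
        + γ * |g| * Kp * T ^ 2 * (2 * γ * T * A) ^ (p - 1) * (2 * γ * T * A) := by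
        rw [excitonRate, hBp]
        ring
    _ ≤ (2 * γ * T * A) / 2 + 1 / 8 * (2 * γ * T * A) + 1 / 8 * (2 * γ * T * A) := by
        gcongr
        exact (by ring : γ * T * A = 2 * γ * T * A / 2).le
    _ = 3 / 4 * (2 * γ * T * A) := by ring

namespace IsDuhamelSolution

variable {U : ℝ → E →ₗᵢ[ℂ] E} {N : E → E} {γ g ω₀ Kp p T : ℝ} {u₀ : E} {φ ψ : ℝ → E}

theorem exciton_zero (h : IsDuhamelSolution U N γ g ω₀ u₀ φ ψ T) (hT : 0 ≤ T) : ψ 0 = 0 := by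
  simpa using h.exciton_eq 0 ⟨le_rfl, hT⟩

theorem norm_photon_le (h : IsDuhamelSolution U N γ g ω₀ u₀ φ ψ T) (hγ : 0 ≤ γ) {s B : ℝ}
    (hs : s ∈ Icc 0 T) (hψ : ∀ τ ∈ Icc 0 s, ‖ψ τ‖ ≤ B) : ‖φ s‖ ≤ ‖u₀‖ + γ * B * s := by
  have hint : ‖∫ τ in (0:ℝ)..s, U (s - τ) (ψ τ)‖ ≤ B * s :=
    norm_intervalIntegral_le_mul hs.1 fun τ hτ => by
      simpa using hψ τ (Ioc_subset_Icc_self hτ)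
  calc ‖φ s‖ ≤ ‖U s u₀‖ + ‖(Complex.I * (γ : ℂ)) • ∫ τ in (0:ℝ)..s, U (s - τ) (ψ τ)‖ := by
        rw [h.photon_eq s hs]; exact norm_sub_le _ _
    _ ≤ ‖u₀‖ + γ * (B * s) := by
        rw [LinearIsometry.norm_map, norm_I_mul_ofReal_smul, abs_of_nonneg hγ]; gcongr
    _ = ‖u₀‖ + γ * B * s := by ring

theorem norm_exciton_le (h : IsDuhamelSolution U N γ g ω₀ u₀ φ ψ T) (hγ : 0 ≤ γ)
    (hKp : 0 ≤ Kp) (hp : 0 ≤ p) (hN : ∀ u : E, ‖N u‖ ≤ Kp * ‖u‖ ^ p) {s B : ℝ}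
    (hs : s ∈ Icc 0 T) (hψ : ∀ τ ∈ Icc 0 s, ‖ψ τ‖ ≤ B) :
    ‖ψ s‖ ≤ excitonRate γ g Kp p ‖u₀‖ B T * s := by
  have hB : 0 ≤ B := (norm_nonneg _).trans (hψ 0 ⟨le_rfl, hs.1⟩)
  have hnonlin : ‖∫ σ in (0:ℝ)..s,
      Complex.exp (-(Complex.I) * (ω₀ : ℂ) * ((s - σ : ℝ) : ℂ)) • N (ψ σ)‖ ≤ Kp * B ^ p * T :=
    calc _ ≤ Kp * B ^ p * s := norm_intervalIntegral_le_mul hs.1 fun σ hσ => by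
          rw [norm_exp_neg_I_mul_smul]
          exact (hN _).trans (by gcongr; exact hψ σ (Ioc_subset_Icc_self hσ))
      _ ≤ Kp * B ^ p * T := by gcongr; exact hs.2
  have hint := norm_intervalIntegral_le_mul hs.1 fun τ (hτ : τ ∈ Ioc 0 s) =>
    calc ‖Complex.exp (-(Complex.I) * (ω₀ : ℂ) * ((s - τ : ℝ) : ℂ)) • φ τ
          - (Complex.I * (g : ℂ)) • ∫ σ in (0:ℝ)..s,
            Complex.exp (-(Complex.I) * (ω₀ : ℂ) * ((s - σ : ℝ) : ℂ)) • N (ψ σ)‖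
        ≤ ‖φ τ‖ + |g| * (Kp * B ^ p * T) := by
          refine (norm_sub_le _ _).trans ?_
          rw [norm_exp_neg_I_mul_smul, norm_I_mul_ofReal_smul]
          gcongr
      _ ≤ ‖u₀‖ + γ * B * T + |g| * Kp * B ^ p * T := by
          have hφ := h.norm_photon_le hγ ⟨hτ.1.le, hτ.2.trans hs.2⟩
            fun σ hσ => hψ σ ⟨hσ.1, hσ.2.trans hτ.2⟩
          have : γ * B * τ ≤ γ * B * T := by gcongr; exact hτ.2.trans hs.2
          linarith
  rw [h.exciton_eq s hs, neg_smul, norm_neg, norm_I_mul_ofReal_smul, abs_of_nonneg hγ,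
    excitonRate, mul_assoc]
  gcongr

theorem norm_exciton_le_excitonRate_mul (h : IsDuhamelSolution U N γ g ω₀ u₀ φ ψ T)
    (hγ : 0 < γ) (hKp : 0 ≤ Kp) (hp : 1 ≤ p) (hN : ∀ u : E, ‖N u‖ ≤ Kp * ‖u‖ ^ p) {M : ℝ}
    (hu₀ : 0 < ‖u₀‖) (hu₀M : ‖u₀‖ ≤ M) (hT : 0 ≤ T) (hsmall₁ : γ ^ 2 * T ^ 2 ≤ 1 / 8)
    (hsmall₂ : γ * |g| * Kp * T ^ 2 * (2 * γ * T * M) ^ (p - 1) ≤ 1 / 8) :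
    ∀ s ∈ Icc 0 T, ‖ψ s‖ ≤ excitonRate γ g Kp p ‖u₀‖ (2 * γ * T * ‖u₀‖) T * s := by
  have hrate := excitonRate_mul_le hγ hKp hp hu₀ hu₀M hT hsmall₁ hsmall₂
  have hψB : ∀ s ∈ Icc 0 T, ‖ψ s‖ ≤ 2 * γ * T * ‖u₀‖ := by
    rcases hT.eq_or_lt with rfl | hT
    · intro s hs
      obtain rfl : s = 0 := le_antisymm hs.2 hs.1
      simp [h.exciton_zero le_rfl]
    refine h.continuousOn_exciton.norm.le_of_bootstrap
      (by rw [h.exciton_zero hT.le, norm_zero]; positivity) fun s hs hψ => ?_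
    calc ‖ψ s‖ ≤ excitonRate γ g Kp p ‖u₀‖ (2 * γ * T * ‖u₀‖) T * s :=
          h.norm_exciton_le hγ.le hKp (by linarith) hN hs hψ
      _ ≤ excitonRate γ g Kp p ‖u₀‖ (2 * γ * T * ‖u₀‖) T * T := by
          gcongr
          · exact excitonRate_nonneg hγ.le hKp hu₀.le (by positivity) hT.le
          · exact hs.2
      _ < 2 * γ * T * ‖u₀‖ := by
          have : 0 < 2 * γ * T * ‖u₀‖ := by positivity
          linarith
  exact fun s hs => h.norm_exciton_le hγ.le hKp (by linarith) hN hs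
    fun τ hτ => hψB τ ⟨hτ.1, hτ.2.trans hs.2⟩

theorem norm_sub_photon_le (h : IsDuhamelSolution U N γ g ω₀ u₀ φ ψ T) (hγ : 0 ≤ γ) {κ : ℝ}
    (hψ : ∀ s ∈ Icc 0 T, ‖ψ s‖ ≤ κ * s) {t : ℝ} (ht : t ∈ Icc 0 T) :
    ‖U t u₀ - φ t‖ ≤ γ * κ * t ^ 2 / 2 := by
  have hint : ‖∫ τ in (0:ℝ)..t, U (t - τ) (ψ τ)‖ ≤ κ * t ^ 2 / 2 :=
    calc _ ≤ ∫ τ in (0:ℝ)..t, κ * τ :=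
          intervalIntegral.norm_integral_le_of_norm_le ht.1
            (ae_of_all _ fun τ hτ => by
              simpa using hψ τ ⟨hτ.1.le, hτ.2.trans ht.2⟩)
            ((continuous_const.mul continuous_id).intervalIntegrable _ _)
      _ = κ * t ^ 2 / 2 := by rw [intervalIntegral.integral_const_mul, integral_id]; ring
  rw [h.photon_eq t ht, sub_sub_cancel, norm_I_mul_ofReal_smul, abs_of_nonneg hγ]
  calc γ * _ ≤ γ * (κ * t ^ 2 / 2) := by gcongr
    _ = _ := by ring

end IsDuhamelSolution

end Duhamel

theorem three_halves_lt_min_two {p α : ℝ} (hp : 1 < p) (hα : 0 ≤ α) :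
    3 / 2 < min 2 (1 + p / 2 + α * (p - 1)) :=
  lt_min (by norm_num) (by nlinarith)

theorem eventually_smallness (γ g Kp p M C₁ : ℝ) (hp : 1 ≤ p) :
    ∀ᶠ ε in 𝓝[>] (0:ℝ), γ ^ 2 * (C₁ * ε ^ (1 / 2 : ℝ)) ^ 2 ≤ 1 / 8 ∧
      γ * |g| * Kp * (C₁ * ε ^ (1 / 2 : ℝ)) ^ 2 * (2 * γ * (C₁ * ε ^ (1 / 2 : ℝ)) * M) ^ (p - 1)
        ≤ 1 / 8 := by
  have hT : Tendsto (fun ε : ℝ => C₁ * ε ^ (1 / 2 : ℝ)) (𝓝[>] 0) (𝓝 0) := by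
    simpa using ((Real.continuousAt_rpow_const 0 (1 / 2) (Or.inr (by norm_num))).tendsto.const_mul
      C₁).mono_left nhdsWithin_le_nhds
  have h₁ : Tendsto (fun x : ℝ => γ ^ 2 * x ^ 2) (𝓝 0) (𝓝 0) := by
    have : Continuous fun x : ℝ => γ ^ 2 * x ^ 2 := by fun_prop
    simpa using this.tendsto 0
  have h₂ : Tendsto (fun x : ℝ => γ * |g| * Kp * x ^ 2 * (2 * γ * x * M) ^ (p - 1))
      (𝓝 0) (𝓝 0) := by
    have : ContinuousAt (fun x : ℝ => γ * |g| * Kp * x ^ 2 * (2 * γ * x * M) ^ (p - 1)) 0 :=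
      continuousAt_const.mul (continuousAt_id.pow 2) |>.mul
        ((continuousAt_const.mul continuousAt_id).mul continuousAt_const |>.rpow_const
          (Or.inr (by linarith)))
    simpa using this.tendsto
  exact hT.eventually
    ((h₁.eventually_le_const (by norm_num)).and (h₂.eventually_le_const (by norm_num)))

theorem le_mul_of_le_mul_reference {e A φ u ρ : ℝ} (hu₀ : 0 ≤ u) (hu₁ : u ≤ 1) (hρ : 0 ≤ ρ)
    (hφ : 0 ≤ φ) (he : e ≤ u / 2 * A + ρ * A) (hA : A ≤ φ + e) (he_half : e ≤ A / 2) :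
    e ≤ (u / 2 + u ^ 2 / 2 + 3 * ρ) * φ := by
  have hAφ : A ≤ 2 * φ := by linarith
  have hρA : ρ * A ≤ ρ * (2 * φ) := mul_le_mul_of_nonneg_left hAφ hρ
  have he' : e ≤ u * φ + 2 * ρ * φ := by
    nlinarith [mul_le_mul_of_nonneg_left hAφ (by positivity : 0 ≤ u / 2)]
  have hue : u / 2 * e ≤ u / 2 * (u * φ + 2 * ρ * φ) :=
    mul_le_mul_of_nonneg_left he' (by positivity)
  have huρ : u * (ρ * φ) ≤ 1 * (ρ * φ) := mul_le_mul_of_nonneg_right hu₁ (by positivity)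
  nlinarith [mul_le_mul_of_nonneg_left hA (by positivity : 0 ≤ u / 2)]

theorem mul_rpow_half_mul {x ε α M p : ℝ} (hx : 0 ≤ x) (hε : 0 < ε) (hM : 0 < M) :
    (x * ε ^ (1 / 2 : ℝ) * (ε ^ α * M)) ^ p
      = x ^ p * M ^ (p - 1) * ε ^ (p / 2 + α * (p - 1)) * (ε ^ α * M) := by
  have hM' : M ^ p = M ^ (p - 1) * M := by
    rw [Real.rpow_sub_one hM.ne', div_mul_cancel₀ _ hM.ne']
  have hε' : ε ^ (1 / 2 * p) * ε ^ (α * p) = ε ^ (p / 2 + α * (p - 1)) * ε ^ α := by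
    rw [← Real.rpow_add hε, ← Real.rpow_add hε]; ring_nf
  rw [Real.mul_rpow (by positivity) (by positivity), Real.mul_rpow hx (by positivity),
    Real.mul_rpow (by positivity) hM.le, ← Real.rpow_mul hε.le, ← Real.rpow_mul hε.le, hM']
  linear_combination x ^ p * M ^ (p - 1) * M * hε'

noncomputable def photonErrorConstant (γ g Kp p M C₁ : ℝ) : ℝ :=
  7 / 2 * γ ^ 4 * C₁ ^ 4 + 3 / 2 * γ ^ 2 * |g| * Kp * C₁ ^ 3 * (2 * γ * C₁) ^ p * M ^ (p - 1)

theorem photon_error_le {γ g Kp p α M C₁ ε t e φn : ℝ} (hγ : 0 < γ) (hKp : 0 ≤ Kp)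
    (hp : 1 ≤ p) (hα : 0 ≤ α) (hM : 0 < M) (hC₁ : 0 ≤ C₁) (hε : 0 < ε) (hε₁ : ε < 1)
    (ht : t ∈ Icc 0 (C₁ * ε ^ (1 / 2 : ℝ)))
    (hsmall₁ : γ ^ 2 * (C₁ * ε ^ (1 / 2 : ℝ)) ^ 2 ≤ 1 / 8)
    (hsmall₂ : γ * |g| * Kp * (C₁ * ε ^ (1 / 2 : ℝ)) ^ 2
      * (2 * γ * (C₁ * ε ^ (1 / 2 : ℝ)) * M) ^ (p - 1) ≤ 1 / 8)
    (hφn : 0 ≤ φn)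
    (he : e ≤ γ * excitonRate γ g Kp p (ε ^ α * M) (2 * γ * (C₁ * ε ^ (1 / 2 : ℝ)) * (ε ^ α * M))
      (C₁ * ε ^ (1 / 2 : ℝ)) * t ^ 2 / 2)
    (hA : ε ^ α * M ≤ φn + e) :
    e ≤ (γ ^ 2 * C₁ ^ 2 / 2 * ε
      + photonErrorConstant γ g Kp p M C₁ * ε ^ min 2 (1 + p / 2 + α * (p - 1))) * φn := by
  set r := ε ^ (1 / 2 : ℝ) with hr
  set T := C₁ * r with hT
  set A := ε ^ α * M
  set B := 2 * γ * T * A with hB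
  set κ := excitonRate γ g Kp p A B T with hκ
  set L := 1 + p / 2 + α * (p - 1) with hL
  set c := γ ^ 2 * |g| * Kp * C₁ ^ 3 * (2 * γ * C₁) ^ p * M ^ (p - 1) / 2 with hc
  set u := γ ^ 2 * T ^ 2 with hu
  have hr₁ : r ≤ 1 := Real.rpow_le_one hε.le hε₁.le (by norm_num)
  have hr2 : r ^ 2 = ε := by
    rw [hr, ← Real.rpow_natCast, ← Real.rpow_mul hε.le]; norm_num
  have hu_eq : u = γ ^ 2 * C₁ ^ 2 * ε := by rw [hu, hT, ← hr2]; ring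
  have hT₀ : 0 ≤ T := by positivity
  have hA₀ : 0 < A := by positivity
  have hAM : A ≤ M := mul_le_of_le_one_left hM.le (Real.rpow_le_one hε.le hε₁.le hα)
  have hκ₀ : 0 ≤ κ := excitonRate_nonneg hγ.le hKp hA₀.le (by positivity) hT₀
  have hκT : γ * κ * t ^ 2 / 2 ≤ γ * T / 2 * (κ * T) :=
    calc γ * κ * t ^ 2 / 2 ≤ γ * κ * T ^ 2 / 2 := by gcongr; exacts [ht.1, ht.2]
      _ = γ * T / 2 * (κ * T) := by ring
  have he_half : e ≤ A / 2 := by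
    have hrate : κ * T ≤ 3 / 4 * B := excitonRate_mul_le hγ hKp hp hA₀ hAM hT₀ hsmall₁ hsmall₂
    have : γ * T / 2 * (κ * T) ≤ γ * T / 2 * (3 / 4 * B) := by gcongr
    nlinarith
  have hnonlin : u / 2 * (|g| * Kp * B ^ p * T) ≤ c * ε ^ L * A := by
    have hε_L : ε ^ L = ε * ε ^ (p / 2 + α * (p - 1)) := by
      rw [hL, show 1 + p / 2 + α * (p - 1) = 1 + (p / 2 + α * (p - 1)) by ring,
        Real.rpow_add hε, Real.rpow_one]
    calc u / 2 * (|g| * Kp * B ^ p * T) = c * ε ^ L * A * r := by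
          rw [show B = 2 * γ * C₁ * r * A by ring, mul_rpow_half_mul (by positivity) hε hM, hε_L,
            hu_eq, hT, hc]
          ring
      _ ≤ c * ε ^ L * A := mul_le_of_le_one_right (by positivity) hr₁
  have hsplit : e ≤ u / 2 * A + (u ^ 2 + c * ε ^ L) * A :=
    calc e ≤ γ * T / 2 * (κ * T) := he.trans hκT
      _ = u / 2 * A + u ^ 2 * A + u / 2 * (|g| * Kp * B ^ p * T) := by
          rw [hκ, excitonRate, hu, hB]; ring
      _ ≤ u / 2 * A + (u ^ 2 + c * ε ^ L) * A := by linarith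
  have hq₂ : ε ^ 2 ≤ ε ^ min 2 L := by
    rw [← Real.rpow_two]; exact Real.rpow_le_rpow_of_exponent_ge hε hε₁.le (min_le_left _ _)
  have hq_L : ε ^ L ≤ ε ^ min 2 L := Real.rpow_le_rpow_of_exponent_ge hε hε₁.le (min_le_right _ _)
  calc e ≤ (u / 2 + u ^ 2 / 2 + 3 * (u ^ 2 + c * ε ^ L)) * φn :=
        le_mul_of_le_mul_reference (by positivity) (by linarith) (by positivity) hφn hsplit hA
          he_half
    _ ≤ _ := by
        gcongr ?_ * φn
        have hD : photonErrorConstant γ g Kp p M C₁ = 7 / 2 * (γ ^ 4 * C₁ ^ 4) + 3 * c := by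
          rw [photonErrorConstant, hc]; ring
        have hu2 : u ^ 2 = γ ^ 4 * C₁ ^ 4 * ε ^ 2 := by rw [hu_eq]; ring
        rw [hD, hu2, hu_eq]
        nlinarith [mul_le_mul_of_nonneg_left hq₂ (by positivity : 0 ≤ γ ^ 4 * C₁ ^ 4),
          mul_le_mul_of_nonneg_left hq_L (by positivity : 0 ≤ c)]

theorem stmt15_general {E : Type*} [NormedAddCommGroup E] [NormedSpace ℂ E]
    (p γ g ω₀ Kp α M C₁ T : ℝ) (hp : 1 < p) (hγ : 0 < γ) (hKp : 0 ≤ Kp)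
    (hα : 0 ≤ α) (hM : 0 < M) (hC₁ : 0 ≤ C₁)
    (U : ℝ → E →ₗᵢ[ℂ] E) (N : E → E) (hN : ∀ u : E, ‖N u‖ ≤ Kp * ‖u‖ ^ p)
    (φ₀ : E) (hφ₀ : ‖φ₀‖ = M)
    (φ ψ : ℝ → ℝ → E)
    (hψc : ∀ ε ∈ Ioo (0:ℝ) 1, ContinuousOn (ψ ε) (Icc 0 T))
    (hDuhφ : ∀ ε ∈ Ioo (0:ℝ) 1, ∀ t ∈ Icc (0:ℝ) T,
      φ ε t = ((ε ^ α : ℝ) : ℂ) • U t φ₀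
        - (Complex.I * (γ : ℂ)) • ∫ τ in (0:ℝ)..t, U (t - τ) (ψ ε τ))
    (hDuhψ : ∀ ε ∈ Ioo (0:ℝ) 1, ∀ t ∈ Icc (0:ℝ) T,
      ψ ε t = -(Complex.I * (γ : ℂ)) • ∫ τ in (0:ℝ)..t,
              Complex.exp (-(Complex.I) * (ω₀ : ℂ) * ((t - τ : ℝ) : ℂ)) • φ ε τ
            - (Complex.I * (g : ℂ)) • ∫ τ in (0:ℝ)..t,
              Complex.exp (-(Complex.I) * (ω₀ : ℂ) * ((t - τ : ℝ) : ℂ)) • N (ψ ε τ)) :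
    3 / 2 < min 2 (1 + p / 2 + α * (p - 1)) ∧
    ∃ D ≥ (0:ℝ), ∃ ε₀ > (0:ℝ), ∀ ε : ℝ, 0 < ε → ε < ε₀ → ε < 1 →
      C₁ * ε ^ ((1:ℝ)/2) < T →
      ∀ t ∈ Icc (0:ℝ) (C₁ * ε ^ ((1:ℝ)/2)),
        ‖((ε ^ α : ℝ) : ℂ) • U t φ₀ - φ ε t‖
          ≤ (γ ^ 2 * C₁ ^ 2 / 2 * ε + D * ε ^ min 2 (1 + p / 2 + α * (p - 1))) * ‖φ ε t‖ := by
  refine ⟨three_halves_lt_min_two hp hα, ?_⟩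
  obtain ⟨ε₀, hε₀, hsmall⟩ :=
    mem_nhdsGT_iff_exists_Ioo_subset.1 (eventually_smallness γ g Kp p M C₁ hp.le)
  refine ⟨photonErrorConstant γ g Kp p M C₁, by unfold photonErrorConstant; positivity, ε₀, hε₀,
    fun ε hε hεε₀ hε₁ hTε t ht => ?_⟩
  obtain ⟨hsmall₁, hsmall₂⟩ := hsmall ⟨hε, hεε₀⟩
  have hε' : ε ∈ Ioo (0:ℝ) 1 := ⟨hε, hε₁⟩
  have hsub : Icc 0 (C₁ * ε ^ ((1:ℝ)/2)) ⊆ Icc 0 T := Icc_subset_Icc_right hTε.le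
  have hsol : IsDuhamelSolution U N γ g ω₀ (((ε ^ α : ℝ) : ℂ) • φ₀) (φ ε) (ψ ε)
      (C₁ * ε ^ ((1:ℝ)/2)) :=
    ⟨(hψc ε hε').mono hsub, fun s hs => by rw [map_smul]; exact hDuhφ ε hε' s (hsub hs),
      fun s hs => hDuhψ ε hε' s (hsub hs)⟩
  have hu₀ : ‖((ε ^ α : ℝ) : ℂ) • φ₀‖ = ε ^ α * M := by
    rw [norm_smul, Complex.norm_real, Real.norm_of_nonneg (by positivity), hφ₀]
  have hu₀M : ε ^ α * M ≤ M := mul_le_of_le_one_left hM.le (Real.rpow_le_one hε.le hε₁.le hα)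
  have hψ := hsol.norm_exciton_le_excitonRate_mul hγ hKp hp.le hN (hu₀ ▸ by positivity)
    (hu₀ ▸ hu₀M) (by positivity) hsmall₁ hsmall₂
  have he := hsol.norm_sub_photon_le hγ.le hψ ht
  rw [map_smul, hu₀] at he
  refine photon_error_le hγ hKp hp.le hα hM hC₁ hε hε₁ ht hsmall₁ hsmall₂ (norm_nonneg _) he ?_
  calc ε ^ α * M = ‖((ε ^ α : ℝ) : ℂ) • U t φ₀‖ := by
        rw [← map_smul, LinearIsometry.norm_map, hu₀]
    _ ≤ _ := norm_le_norm_add_norm_sub' _ _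

/-- Short-time theorem for the exciton-polariton system, regime A: with data
`φ(0) = φ̃(0) = ε^α φ₀` (`‖φ₀‖ = M`), `ψ(0) = ψ̃(0) = 0`, the relative error between the
photon field `φ` of the nonlinear system and the fully decoupled approximation
`φ̃(t) = ε^α e^{itΔ}φ₀` satisfies `‖φ̃(t) − φ(t)‖/‖φ(t)‖ ≤ ½γ²C₁²ε + O(ε^q)` for
`0 ≤ t ≤ C₁ε^{1/2}`, where `q = min{2, 1 + p/2 + α(p−1)} > 3/2`.
Abstract setting: `E = H^s(ℝⁿ)`, `s > n/2`; `U t = e^{itΔ}` isometric;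
`N u = |u|^{p−1}u` with `‖N u‖ ≤ K_p‖u‖^p`. -/
theorem stmt15 {E : Type*} [NormedAddCommGroup E] [NormedSpace ℂ E] [CompleteSpace E]
    (p γ g ω₀ Kp α M C₁ T : ℝ) (hp : 1 < p) (hγ : 0 < γ) (hKp : 0 ≤ Kp)
    (hα : 0 ≤ α) (hM : 0 < M) (hC₁ : 0 ≤ C₁) (hT : 0 < T)
    (U : ℝ → E →ₗᵢ[ℂ] E) (N : E → E) (hN : ∀ u : E, ‖N u‖ ≤ Kp * ‖u‖ ^ p)
    (φ₀ : E) (hφ₀ : ‖φ₀‖ = M)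
    (φ ψ : ℝ → ℝ → E)
    (hφc : ∀ ε ∈ Ioo (0:ℝ) 1, ContinuousOn (φ ε) (Icc 0 T))
    (hψc : ∀ ε ∈ Ioo (0:ℝ) 1, ContinuousOn (ψ ε) (Icc 0 T))
    (hIntU : ∀ ε ∈ Ioo (0:ℝ) 1, ∀ t ∈ Icc (0:ℝ) T,
      IntervalIntegrable (fun τ => U (t - τ) (ψ ε τ)) volume 0 t)
    (hDuhφ : ∀ ε ∈ Ioo (0:ℝ) 1, ∀ t ∈ Icc (0:ℝ) T,
      φ ε t = ((ε ^ α : ℝ) : ℂ) • U t φ₀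
        - (Complex.I * (γ : ℂ)) • ∫ τ in (0:ℝ)..t, U (t - τ) (ψ ε τ))
    (hDuhψ : ∀ ε ∈ Ioo (0:ℝ) 1, ∀ t ∈ Icc (0:ℝ) T,
      ψ ε t = -(Complex.I * (γ : ℂ)) • ∫ τ in (0:ℝ)..t,
              Complex.exp (-(Complex.I) * (ω₀ : ℂ) * ((t - τ : ℝ) : ℂ)) • φ ε τ
            - (Complex.I * (g : ℂ)) • ∫ τ in (0:ℝ)..t,
              Complex.exp (-(Complex.I) * (ω₀ : ℂ) * ((t - τ : ℝ) : ℂ)) • N (ψ ε τ)) :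
    3 / 2 < min 2 (1 + p / 2 + α * (p - 1)) ∧
    ∃ D ≥ (0:ℝ), ∃ ε₀ > (0:ℝ), ∀ ε : ℝ, 0 < ε → ε < ε₀ → ε < 1 →
      C₁ * ε ^ ((1:ℝ)/2) < T →
      ∀ t ∈ Icc (0:ℝ) (C₁ * ε ^ ((1:ℝ)/2)),
        ‖((ε ^ α : ℝ) : ℂ) • U t φ₀ - φ ε t‖
          ≤ (γ ^ 2 * C₁ ^ 2 / 2 * ε + D * ε ^ min 2 (1 + p / 2 + α * (p - 1))) * ‖φ ε t‖ :=
  stmt15_general p γ g ω₀ Kp α M C₁ T hp hγ hKp hα hM hC₁ U N hN φ₀ hφ₀ φ ψ hψc hDuhφ hDuhψ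
end
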